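/- arXiv:2509.20181 — 8 statements merged into one kernel-verified Lean document; each statement's English description precedes it below -/
import Mathlib

section
/- Let (a_n) be a sequence in R^d with ‖a_n‖ → 0. Then there exists a sign sequence ε ∈ {-1,1}^N such that the series ∑_{n=1}^∞ ε_n a_n converges. Moreover, there is a constant K depending only on d such that max_n ‖∑_{i=1}^n ε_i a_i‖ ≤ K · max_n ‖a_n‖. -/
/-!
Bárány–Grinberg: for vectors `v i` of norm at most `ρ` in a `d`-dimensional space, maintain
weights `y ∈ [-1, 1]^ℕ` with `∑_{i<n} y i • v i = 0` and at most `d` coordinates in `(-1, 1)`.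
When `v n` arrives with weight `0` there may be `d + 1` fractional coordinates, hence a linear
relation among their vectors; moving `y` along it until one more coordinate reaches `±1` restores
the invariant without touching the coordinates already at `±1`. The limiting signs differ from
`y` in at most `d` of the first `n` places, so every partial sum has norm at most `2dρ`.

For a null sequence, cut `ℕ` into blocks `[N k, N (k + 1))` on which `‖a n‖ ≤ B / 2 ^ k` and
balance each block separately: inside the `k`-th block the partial sums move by at most
`2dB / 2 ^ k`, which is summable, so the partial sums are Cauchy and bounded by `4dB`.
-/

open Filter Finset Module

lemma exists_sum_smul_eq_zero_of_finrank_lt_card {K V ι : Type*} [Field K] [AddCommGroup V]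
    [Module K V] [FiniteDimensional K V] (v : ι → V) {s : Finset ι} (hs : finrank K V < #s) :
    ∃ c : ι → K, (∀ i ∉ s, c i = 0) ∧ ∑ i ∈ s, c i • v i = 0 ∧ ∃ i ∈ s, c i ≠ 0 := by
  obtain ⟨g, hg, i, hi, hgi⟩ := not_linearIndepOn_finset_iff.1 fun h : LinearIndepOn K v s =>
    (h.fintype_card_le_finrank.trans_lt (by simpa using hs)).false
  refine ⟨(s : Set ι).indicator g, fun j hj => Set.indicator_of_notMem hj _, ?_, i, hi, ?_⟩
  · rw [← hg]
    exact sum_congr rfl fun j hj => by rw [Set.indicator_of_mem (mem_coe.2 hj)]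
  · rwa [Set.indicator_of_mem (mem_coe.2 hi)]

lemma exists_abs_add_mul_eq_one {y c : ℝ} (hy : |y| ≤ 1) (hc : c ≠ 0) :
    ∃ τ, 0 ≤ τ ∧ |y + τ * c| = 1 ∧ ∀ t, 0 ≤ t → t ≤ τ → |y + t * c| ≤ 1 := by
  wlog hc₀ : 0 < c generalizing y c
  · obtain ⟨τ, hτ, hτy, hτt⟩ := this (y := -y) (c := -c) (by rwa [abs_neg]) (neg_ne_zero.2 hc)
      (neg_pos.2 (lt_of_le_of_ne (not_lt.1 hc₀) hc))
    refine ⟨τ, hτ, ?_, fun t ht htτ => ?_⟩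
    · rw [← abs_neg]; convert hτy using 2; ring
    · rw [← abs_neg]; convert hτt t ht htτ using 2; ring
  obtain ⟨hy₁, hy₂⟩ := abs_le.1 hy
  refine ⟨(1 - y) / c, div_nonneg (by linarith) hc₀.le, ?_, fun t ht htτ => abs_le.2 ⟨?_, ?_⟩⟩
  · rw [div_mul_cancel₀ _ hc, add_sub_cancel, abs_one]
  · nlinarith
  · nlinarith [(le_div_iff₀ hc₀).1 htτ]

lemma exists_abs_add_mul_le_one_and_eq_one {ι : Type*} {s : Finset ι} {y c : ι → ℝ}
    (hy : ∀ i ∈ s, |y i| ≤ 1) (hc : ∃ i ∈ s, c i ≠ 0) :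
    ∃ t, (∀ i ∈ s, |y i + t * c i| ≤ 1) ∧ ∃ j ∈ s, |y j + t * c j| = 1 := by
  classical
  have hτ : ∀ i ∈ {i ∈ s | c i ≠ 0}, ∃ τ, 0 ≤ τ ∧ |y i + τ * c i| = 1 ∧
      ∀ t, 0 ≤ t → t ≤ τ → |y i + t * c i| ≤ 1 := fun i hi =>
    exists_abs_add_mul_eq_one (hy i (mem_filter.1 hi).1) (mem_filter.1 hi).2
  choose! τ hτ₀ hτ₁ hτ₂ using hτ
  obtain ⟨i₀, hi₀, hci₀⟩ := hc
  obtain ⟨j, hj, hmin⟩ := exists_min_image {i ∈ s | c i ≠ 0} τ ⟨i₀, mem_filter.2 ⟨hi₀, hci₀⟩⟩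
  refine ⟨τ j, fun i hi => ?_, j, (mem_filter.1 hj).1, hτ₁ j hj⟩
  by_cases hci : c i = 0
  · simpa [hci] using hy i hi
  · have hi' : i ∈ {i ∈ s | c i ≠ 0} := mem_filter.2 ⟨hi, hci⟩
    exact hτ₂ i hi' _ (hτ₀ j hj) (hmin i hi')

section BaranyGrinberg

variable {E : Type*} [NormedAddCommGroup E] [NormedSpace ℝ E] {v : ℕ → E} {n : ℕ} {y : ℕ → ℝ}

structure IsFractionalBalancing (v : ℕ → E) (n : ℕ) (y : ℕ → ℝ) : Prop where
  abs_le_one : ∀ i, |y i| ≤ 1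
  eq_zero_of_le : ∀ i, n ≤ i → y i = 0
  sum_smul_eq_zero : ∑ i ∈ range n, y i • v i = 0
  card_fractional_le : #{i ∈ range n | |y i| ≠ 1} ≤ finrank ℝ E

lemma isFractionalBalancing_zero (v : ℕ → E) : IsFractionalBalancing v 0 0 :=
  ⟨fun _ => by simp, fun _ _ => rfl, by simp, by simp⟩

lemma IsFractionalBalancing.card_fractional_succ_le (h : IsFractionalBalancing v n y) :
    #{i ∈ range (n + 1) | |y i| ≠ 1} ≤ finrank ℝ E + 1 := by
  have : {i ∈ range (n + 1) | |y i| ≠ 1} ⊆ insert n {i ∈ range n | |y i| ≠ 1} := by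
    intro i hi
    obtain ⟨hin, hi⟩ := mem_filter.1 hi
    rcases Nat.lt_succ_iff_lt_or_eq.1 (mem_range.1 hin) with hin | rfl
    · exact mem_insert_of_mem (mem_filter.2 ⟨mem_range.2 hin, hi⟩)
    · exact mem_insert_self _ _
  exact (card_le_card this).trans
    ((card_insert_le _ _).trans (by simpa using h.card_fractional_le))

lemma IsFractionalBalancing.exists_succ [FiniteDimensional ℝ E]
    (h : IsFractionalBalancing v n y) :
    ∃ y', IsFractionalBalancing v (n + 1) y' ∧ ∀ i, |y i| = 1 → y' i = y i := by
  set F := {i ∈ range (n + 1) | |y i| ≠ 1}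
  have hyn : y n = 0 := h.eq_zero_of_le n le_rfl
  have hsum : ∑ i ∈ range (n + 1), y i • v i = 0 := by
    rw [sum_range_succ, hyn, zero_smul, add_zero, h.sum_smul_eq_zero]
  have hF : #F ≤ finrank ℝ E + 1 := h.card_fractional_succ_le
  by_cases hFd : #F ≤ finrank ℝ E
  · exact ⟨y, ⟨h.abs_le_one, fun i hi => h.eq_zero_of_le i (by omega), hsum, hFd⟩, fun _ _ => rfl⟩
  obtain ⟨c, hcF, hc, hc₀⟩ := exists_sum_smul_eq_zero_of_finrank_lt_card (K := ℝ) v (not_le.1 hFd)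
  obtain ⟨t, ht, j, hjF, hj⟩ :=
    exists_abs_add_mul_le_one_and_eq_one (fun i _ => h.abs_le_one i) hc₀
  have hFn : F ⊆ range (n + 1) := filter_subset _ _
  refine ⟨fun i => y i + t * c i, ⟨fun i => ?_, fun i hi => ?_, ?_, ?_⟩, fun i hi => ?_⟩
  · by_cases hi : i ∈ F
    · exact ht i hi
    · simpa [hcF i hi] using h.abs_le_one i
  · have : i ∉ F := fun hiF => by have := mem_range.1 (hFn hiF); omega
    simp [hcF i this, h.eq_zero_of_le i (by omega)]
  · have hcn : ∑ i ∈ range (n + 1), c i • v i = 0 := by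
      rw [← sum_subset hFn fun i _ hi => by simp [hcF i hi], hc]
    simp only [add_smul, sum_add_distrib, hsum, mul_smul, ← smul_sum, hcn, smul_zero, add_zero]
  · have : {i ∈ range (n + 1) | |y i + t * c i| ≠ 1} ⊆ F.erase j := by
      intro i hi
      obtain ⟨hin, hi⟩ := mem_filter.1 hi
      refine mem_erase.2 ⟨by rintro rfl; exact hi hj, ?_⟩
      by_contra hiF
      simp only [hcF i hiF, mul_zero, add_zero] at hi
      exact hiF (mem_filter.2 ⟨hin, hi⟩)
    have := card_le_card this
    rw [card_erase_of_mem hjF] at this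
    omega
  · have : i ∉ F := fun hiF => (mem_filter.1 hiF).2 hi
    simp [hcF i this]

variable [FiniteDimensional ℝ E]

noncomputable def balancingSeq (v : ℕ → E) : (n : ℕ) → {y : ℕ → ℝ // IsFractionalBalancing v n y}
  | 0 => ⟨0, isFractionalBalancing_zero v⟩
  | n + 1 => ⟨Classical.choose (balancingSeq v n).2.exists_succ,
      (Classical.choose_spec (balancingSeq v n).2.exists_succ).1⟩

lemma balancingSeq_eq_of_le {m n i : ℕ} (hmn : m ≤ n) (hi : |(balancingSeq v m).1 i| = 1) :
    (balancingSeq v n).1 i = (balancingSeq v m).1 i := by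
  induction n, hmn using Nat.le_induction with
  | base => rfl
  | succ n _ ih =>
    rw [← ih]
    exact (Classical.choose_spec (balancingSeq v n).2.exists_succ).2 i (ih ▸ hi)

-- A coordinate fixed at `±1` at some stage keeps that value forever; the (at most
-- `finrank ℝ E`) coordinates that are never fixed get the sign `1`.
open Classical in
noncomputable def balancingSigns (v : ℕ → E) (i : ℕ) : ℝ :=
  if ∃ m, (balancingSeq v m).1 i = -1 then -1 else 1

lemma balancingSigns_eq_or_eq (v : ℕ → E) (i : ℕ) :
    balancingSigns v i = 1 ∨ balancingSigns v i = -1 := by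
  unfold balancingSigns
  split_ifs <;> simp

lemma balancingSigns_eq {n i : ℕ} (hi : |(balancingSeq v n).1 i| = 1) :
    balancingSigns v i = (balancingSeq v n).1 i := by
  unfold balancingSigns
  rcases (abs_eq zero_le_one).1 hi with h | h
  · rw [if_neg, h]
    rintro ⟨m, hm⟩
    have hm' : |(balancingSeq v m).1 i| = 1 := by simp [hm]
    have := (balancingSeq_eq_of_le (le_max_left m n) hm').symm.trans
      (balancingSeq_eq_of_le (le_max_right m n) hi)
    linarith
  · rw [if_pos ⟨n, h⟩, h]

theorem exists_signs_norm_sum_range_le (v : ℕ → E) {ρ : ℝ} (hv : ∀ i, ‖v i‖ ≤ ρ) :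
    ∃ ε : ℕ → ℝ, (∀ i, ε i = 1 ∨ ε i = -1) ∧
      ∀ n, ‖∑ i ∈ range n, ε i • v i‖ ≤ 2 * finrank ℝ E * ρ := by
  refine ⟨balancingSigns v, balancingSigns_eq_or_eq v, fun n => ?_⟩
  set y := (balancingSeq v n).1
  have hy : IsFractionalBalancing v n y := (balancingSeq v n).2
  have hρ : 0 ≤ ρ := (norm_nonneg _).trans (hv 0)
  have hsum : ∑ i ∈ range n, balancingSigns v i • v i
      = ∑ i ∈ range n with |y i| ≠ 1, (balancingSigns v i - y i) • v i := by
    rw [sum_filter_of_ne]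
    · simp only [sub_smul, sum_sub_distrib, hy.sum_smul_eq_zero, sub_zero]
    · intro i _ hi hyi
      rw [balancingSigns_eq hyi, sub_self, zero_smul] at hi
      exact hi rfl
  have hterm : ∀ i, ‖(balancingSigns v i - y i) • v i‖ ≤ 2 * ρ := fun i => by
    rw [norm_smul, Real.norm_eq_abs]
    refine mul_le_mul ((abs_sub _ _).trans ?_) (hv i) (norm_nonneg _) zero_le_two
    rcases balancingSigns_eq_or_eq v i with h | h <;> simp [h] <;> linarith [hy.abs_le_one i]
  calc ‖∑ i ∈ range n, balancingSigns v i • v i‖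
      ≤ #{i ∈ range n | |y i| ≠ 1} • (2 * ρ) := by
        rw [hsum]
        exact (norm_sum_le _ _).trans (sum_le_card_nsmul _ _ _ fun i _ => hterm i)
    _ ≤ finrank ℝ E • (2 * ρ) := nsmul_le_nsmul_left (by positivity) hy.card_fractional_le
    _ = 2 * finrank ℝ E * ρ := by rw [nsmul_eq_mul]; ring

end BaranyGrinberg

section Blocks

variable {E : Type*} [SeminormedAddCommGroup E] {S : ℕ → E} {N : ℕ → ℕ} {C : ℝ}

lemma norm_sub_le_of_forall_block (hN : StrictMono N)
    (hS : ∀ k n, N k ≤ n → n ≤ N (k + 1) → ‖S n - S (N k)‖ ≤ C / 2 ^ k) {k n : ℕ}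
    (hkn : N k ≤ n) : ‖S n - S (N k)‖ ≤ 2 * C / 2 ^ k := by
  have hC : 0 ≤ C := by
    simpa using (norm_nonneg _).trans (hS 0 (N 0) le_rfl (hN.monotone (Nat.zero_le 1)))
  have key : ∀ j n, N k ≤ n → n ≤ N (k + j) →
      ‖S n - S (N k)‖ ≤ 2 * C / 2 ^ k - 2 * C / 2 ^ (k + j) := by
    intro j
    induction j with
    | zero => intro n h₁ h₂; simp [le_antisymm h₂ h₁]
    | succ j ih =>
      intro n h₁ h₂
      rcases le_or_gt n (N (k + j)) with h | h
      · refine (ih n h₁ h).trans (sub_le_sub_left ?_ _)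
        exact div_le_div_of_nonneg_left (by positivity) (by positivity)
          (pow_le_pow_right₀ one_le_two (by omega))
      · calc ‖S n - S (N k)‖ ≤ ‖S n - S (N (k + j))‖ + ‖S (N (k + j)) - S (N k)‖ :=
              norm_sub_le_norm_sub_add_norm_sub _ _ _
          _ ≤ C / 2 ^ (k + j) + (2 * C / 2 ^ k - 2 * C / 2 ^ (k + j)) :=
              add_le_add (hS _ _ h.le h₂) (ih _ (hN.monotone (Nat.le_add_right k j)) le_rfl)
          _ = 2 * C / 2 ^ k - 2 * C / 2 ^ (k + (j + 1)) := by rw [← add_assoc, pow_succ]; ring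
  calc ‖S n - S (N k)‖ ≤ 2 * C / 2 ^ k - 2 * C / 2 ^ (k + n) :=
        key n n hkn ((Nat.le_add_left n k).trans (hN.id_le _))
    _ ≤ 2 * C / 2 ^ k := sub_le_self _ (by positivity)

lemma cauchySeq_of_forall_block (hN : StrictMono N)
    (hS : ∀ k n, N k ≤ n → n ≤ N (k + 1) → ‖S n - S (N k)‖ ≤ C / 2 ^ k) : CauchySeq S := by
  refine Metric.cauchySeq_iff'.2 fun δ hδ => ?_
  have hlim : Tendsto (fun k : ℕ => 2 * C / 2 ^ k) atTop (nhds 0) :=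
    tendsto_const_nhds.div_atTop (tendsto_pow_atTop_atTop_of_one_lt one_lt_two)
  obtain ⟨k, hk⟩ := (hlim.eventually (gt_mem_nhds hδ)).exists
  exact ⟨N k, fun n hn => (dist_eq_norm _ _).trans_le (norm_sub_le_of_forall_block hN hS hn)
    |>.trans_lt hk⟩

end Blocks

lemma StrictMono.findGreatest_le_eq {N : ℕ → ℕ} (hN : StrictMono N) {k n : ℕ} (h₁ : N k ≤ n)
    (h₂ : n < N (k + 1)) : Nat.findGreatest (fun j => N j ≤ n) n = k :=
  Nat.findGreatest_eq_iff.2 ⟨(hN.id_le k).trans h₁, fun _ => h₁,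
    fun _ hj _ hNj => (h₂.trans_le (hN.monotone hj)).not_ge hNj⟩

lemma exists_strictMono_forall_le_div_pow {u : ℕ → ℝ} (hu : Tendsto u atTop (nhds 0)) {B : ℝ}
    (hB : ∀ n, u n ≤ B) :
    ∃ N : ℕ → ℕ, StrictMono N ∧ N 0 = 0 ∧ ∀ k n, N k ≤ n → u n ≤ B / 2 ^ k := by
  have hev : ∀ k : ℕ, ∀ᶠ m in atTop, ∀ n ≥ m, u n ≤ B / 2 ^ k := by
    intro k
    refine eventually_forall_ge_atTop.2 ?_
    rcases (le_of_tendsto' hu hB).eq_or_lt with rfl | hB₀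
    · exact Eventually.of_forall fun n => by simpa using hB n
    · exact hu.eventually (ge_mem_nhds (by positivity))
  obtain ⟨φ, hφ, hφu⟩ := extraction_forall_of_eventually hev
  refine ⟨fun k => if k = 0 then 0 else φ k, strictMono_nat_of_lt_succ fun k => ?_, rfl,
    fun k n hn => ?_⟩
  · rcases k with _ | k
    · simpa using (Nat.zero_le _).trans_lt (hφ zero_lt_one)
    · simpa using hφ (Nat.lt_succ_self (k + 1))
  · rcases k with _ | k
    · simpa using hB n
    · exact hφu _ n (by simpa using hn)

theorem exists_signs_forall_block {E : Type*} [NormedAddCommGroup E] [NormedSpace ℝ E]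
    [FiniteDimensional ℝ E] (a : ℕ → E) {N : ℕ → ℕ} (hN : StrictMono N) {ρ : ℝ}
    (ha : ∀ k n, N k ≤ n → ‖a n‖ ≤ ρ / 2 ^ k) :
    ∃ ε : ℕ → ℝ, (∀ n, ε n = 1 ∨ ε n = -1) ∧ ∀ k n, N k ≤ n → n ≤ N (k + 1) →
      ‖∑ i ∈ range n, ε i • a i - ∑ i ∈ range (N k), ε i • a i‖
        ≤ 2 * finrank ℝ E * ρ / 2 ^ k := by
  have hblock : ∀ k, ∃ ε : ℕ → ℝ, (∀ n, ε n = 1 ∨ ε n = -1) ∧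
      ∀ n, ‖∑ i ∈ range n, ε i • (Set.Ici (N k)).indicator a i‖ ≤ 2 * finrank ℝ E * (ρ / 2 ^ k) :=
    fun k => exists_signs_norm_sum_range_le _ fun i => by
      by_cases hi : N k ≤ i
      · simpa [hi] using ha k i hi
      · simpa [hi] using (norm_nonneg _).trans (ha k (N k) le_rfl)
  choose ε hε hbound using hblock
  refine ⟨fun n => ε (Nat.findGreatest (fun j => N j ≤ n) n) n, fun n => hε _ _,
    fun k n h₁ h₂ => ?_⟩
  have hsum : ∑ i ∈ range n, ε k i • (Set.Ici (N k)).indicator a i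
      = ∑ i ∈ Ico (N k) n, ε (Nat.findGreatest (fun j => N j ≤ i) i) i • a i := by
    rw [← sum_range_add_sum_Ico _ h₁, sum_eq_zero fun i hi => by simp [not_le.2 (mem_range.1 hi)],
      zero_add]
    refine sum_congr rfl fun i hi => ?_
    obtain ⟨hi₁, hi₂⟩ := mem_Ico.1 hi
    rw [Set.indicator_of_mem (Set.mem_Ici.2 hi₁), hN.findGreatest_le_eq hi₁ (hi₂.trans_le h₂)]
  rw [← sum_Ico_eq_sub _ h₁, ← hsum, mul_div_assoc]
  exact hbound k n

/-- For any null sequence `(aₙ)` in `ℝ^d` there is a sign sequence `ε ∈ {-1,1}^ℕ` such that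
`∑ εₙ aₙ` converges, and moreover all partial sums are bounded by `K(d) · sup ‖aₙ‖`. -/
theorem stmt1 (d : ℕ) :
    ∃ K : ℝ, 0 < K ∧ ∀ a : ℕ → EuclideanSpace ℝ (Fin d),
      Tendsto a atTop (nhds 0) →
      ∃ ε : ℕ → ℝ, (∀ n, ε n = 1 ∨ ε n = -1) ∧
        (∃ L : EuclideanSpace ℝ (Fin d),
          Tendsto (fun N => ∑ n ∈ Finset.range N, ε n • a n) atTop (nhds L)) ∧
        ∀ (N : ℕ) (M : ℝ), (∀ n, ‖a n‖ ≤ M) →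
          ‖∑ n ∈ Finset.range N, ε n • a n‖ ≤ K * M := by
  refine ⟨4 * (d + 1), by positivity, fun a ha => ?_⟩
  have hna : Tendsto (‖a ·‖) atTop (nhds 0) := by simpa using ha.norm
  have hB : ∀ n, ‖a n‖ ≤ ⨆ n, ‖a n‖ := le_ciSup hna.bddAbove_range
  obtain ⟨N, hN, hN₀, hNa⟩ := exists_strictMono_forall_le_div_pow hna hB
  obtain ⟨ε, hε, hblock⟩ := exists_signs_forall_block a hN hNa
  refine ⟨ε, hε, cauchySeq_tendsto_of_complete (cauchySeq_of_forall_block hN hblock),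
    fun n M hM => ?_⟩
  have hn := norm_sub_le_of_forall_block hN hblock (hN₀ ▸ Nat.zero_le n)
  simp only [hN₀, range_zero, sum_empty, sub_zero, pow_zero, div_one,
    finrank_euclideanSpace_fin] at hn
  have hBM : ⨆ n, ‖a n‖ ≤ M := ciSup_le hM
  have hB₀ : 0 ≤ ⨆ n, ‖a n‖ := (norm_nonneg _).trans (hB 0)
  calc ‖∑ i ∈ range n, ε i • a i‖ ≤ 2 * (2 * d * ⨆ n, ‖a n‖) := hn
    _ ≤ 4 * (d + 1) * M := by nlinarith [(Nat.cast_nonneg d : (0 : ℝ) ≤ d)]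
end

section
/- Let (a_n) be a null sequence in R^d satisfying the Lévy–Steinitz condition: ∑_{n=1}^∞ |⟨a_n, e⟩| = ∞ for every unit vector e ∈ S^{d-1}. Then the achievement set S(a_n) = {x ∈ R^d : ∃ ε ∈ {-1,1}^N with ∑_{n=1}^∞ ε_n a_n = x} is dense in R^d. -/
/-!
Fix a target `x`, a tolerance `δ` and a small `c > 0`, and choose `A` with `‖aₙ‖ ≤ c` for `n ≥ A`.
Compactness of the unit sphere and the Lévy–Steinitz condition give a block `[A, N)` with
`‖r‖ ≤ ∑_{A ≤ n < N} |⟪aₙ, e⟫|` for every unit vector `e`, where `r = x - ∑_{n < A} aₙ`; by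
Hahn–Banach, `r` then lies in the zonotope `{∑_{A ≤ n < N} γₙ aₙ : |γₙ| ≤ 1}`.
The coefficients are rounded to signs by the Steinitz-type linear-algebra rounding: moving `γ`
along a linear relation among its first `d + 1` fractional coordinates until one of them reaches
`±1` keeps every prefix error `‖∑_{n < k} (εₙ - γₙ) aₙ‖` below `2 d max ‖aₙ‖`. Rounding
separately on dyadic blocks where `‖aₙ‖ ≤ c / 2 ^ k` makes the signed series converge, to a point
within `4 d c < δ` of `x`.
-/

open Filter Finset Module
open scoped RealInnerProductSpace Topology

theorem StrictMono.exists_tendsto_of_dist_le_geometric_two {X : Type*} [PseudoMetricSpace X]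
    [CompleteSpace X] {S : ℕ → X} {P : ℕ → ℕ} (hP : StrictMono P) {C : ℝ}
    (hS : ∀ k M, P k ≤ M → M ≤ P (k + 1) → dist (S (P k)) (S M) ≤ C / 2 / 2 ^ k) :
    ∃ y, Tendsto S atTop (𝓝 y) ∧ dist (S (P 0)) y ≤ C := by
  have hu : ∀ k, dist (S (P k)) (S (P (k + 1))) ≤ C / 2 / 2 ^ k :=
    fun k => hS k _ (hP.monotone k.le_succ) le_rfl
  obtain ⟨y, hy⟩ := cauchySeq_tendsto_of_complete (cauchySeq_of_le_geometric_two hu)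
  refine ⟨y, Metric.tendsto_nhds.2 fun ε hε => ?_, dist_le_of_le_geometric_two_of_tendsto₀ hu hy⟩
  have hC : 0 ≤ C := by linarith [dist_nonneg.trans (hu 0), pow_zero (2 : ℝ)]
  obtain ⟨k, hk⟩ := ((tendsto_const_nhds (x := 2 * C)).div_atTop
    (tendsto_pow_atTop_atTop_of_one_lt one_lt_two)).eventually (gt_mem_nhds hε) |>.exists
  filter_upwards [eventually_ge_atTop (P k)] with M hM
  obtain ⟨j, hj, hj'⟩ := hP.exists_between_of_tendsto_atTop hP.tendsto_atTop (x := M + 1)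
    (Nat.lt_succ_of_le ((hP.monotone k.zero_le).trans hM))
  have hkj : k ≤ j := Nat.lt_succ_iff.1 (hP.lt_iff_lt.1 (hM.trans_lt hj'))
  have h2j : C / 2 ^ j ≤ C / 2 ^ k :=
    div_le_div_of_nonneg_left hC (by positivity) (pow_le_pow_right₀ one_le_two hkj)
  calc dist (S M) y ≤ dist (S (P j)) (S M) + dist (S (P j)) y := dist_triangle_left _ _ _
    _ ≤ C / 2 / 2 ^ j + C / 2 ^ j := add_le_add (hS j M (Nat.le_of_lt_succ hj)
      (Nat.le_of_succ_le hj')) (dist_le_of_le_geometric_two_of_tendsto hu hy j)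
    _ ≤ 2 * C / 2 ^ k := by
      rw [div_right_comm, mul_div_assoc]
      linarith [div_nonneg hC (pow_nonneg zero_le_two j)]
    _ < ε := hk

theorem exists_abs_add_mul_eq_one_s6 {ι : Type*} {s : Finset ι} {γ z : ι → ℝ}
    (hγ : ∀ i ∈ s, |γ i| ≤ 1) (hz : ∃ i ∈ s, z i ≠ 0) :
    ∃ t : ℝ, (∀ i ∈ s, |γ i + t * z i| ≤ 1) ∧ ∃ i ∈ s, |γ i + t * z i| = 1 := by
  obtain ⟨j, hj, hzj⟩ := hz
  have hne : s.Nonempty := ⟨j, hj⟩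
  have hf : Continuous fun t => s.sup' hne fun i => |γ i + t * z i| :=
    Continuous.finset_sup'_apply hne fun i _ => by fun_prop
  have hf0 : (s.sup' hne fun i => |γ i + 0 * z i|) ≤ 1 :=
    sup'_le _ _ fun i hi => by simpa using hγ i hi
  have hfb : 1 ≤ s.sup' hne fun i => |γ i + 2 / |z j| * z i| := by
    refine le_sup'_of_le (fun i => |γ i + 2 / |z j| * z i|) hj ?_
    have h2 : |2 / |z j| * z j| = 2 := by
      rw [abs_mul, abs_div, abs_abs, abs_two, div_mul_cancel₀ _ (abs_ne_zero.2 hzj)]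
    have h3 := abs_sub (γ j + 2 / |z j| * z j) (γ j)
    rw [add_sub_cancel_left, h2] at h3
    linarith [hγ j hj]
  obtain ⟨t, -, ht⟩ :=
    intermediate_value_Icc (b := 2 / |z j|) (by positivity) hf.continuousOn ⟨hf0, hfb⟩
  obtain ⟨i, hi, hfi⟩ := exists_mem_eq_sup' hne fun i => |γ i + t * z i|
  exact ⟨t, fun i hi => ht ▸ le_sup' (fun i => |γ i + t * z i|) hi, i, hi, hfi ▸ ht⟩

section Rounding

variable {E : Type*} [NormedAddCommGroup E] [NormedSpace ℝ E]

theorem norm_sum_sub_smul_le {ι : Type*} (s : Finset ι) {v : ι → E} {γ θ : ι → ℝ} {η : ℝ}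
    (hθ : ∀ i, |θ i| = 1) (hγ : ∀ i, |γ i| ≤ 1) (hθγ : ∀ i, |γ i| = 1 → θ i = γ i)
    (hv : ∀ i ∈ s, |γ i| < 1 → ‖v i‖ ≤ η) :
    ‖∑ i ∈ s, (θ i - γ i) • v i‖ ≤ #{i ∈ s | |γ i| < 1} * (2 * η) := by
  have hterm : ∀ i ∈ s, (θ i - γ i) • v i ≠ 0 → |γ i| < 1 := fun i _ hi =>
    (hγ i).lt_of_ne fun h => hi (by rw [hθγ i h, sub_self, zero_smul])
  rw [← sum_filter_of_ne hterm, ← nsmul_eq_mul]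
  refine (norm_sum_le _ _).trans (sum_le_card_nsmul _ _ _ fun i hi => ?_)
  rw [mem_filter] at hi
  rw [norm_smul, Real.norm_eq_abs]
  have hθγ2 : |θ i - γ i| ≤ 2 := by linarith [abs_sub (θ i) (γ i), hθ i, hγ i]
  exact mul_le_mul hθγ2 (hv i hi.1 hi.2) (norm_nonneg _) zero_le_two

variable [FiniteDimensional ℝ E]

-- `γ` is moved along a linear relation among the `v i` indexed by the shortest prefix `D` of
-- its fractional coordinates with more than `finrank ℝ E` elements, until one of them reaches `±1`.
-- A prefix `Ico A k` then either has few fractional coordinates or contains all of `D`.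
theorem exists_fewer_fractional (v : ℕ → E) (A B : ℕ) (γ : ℕ → ℝ) (hγ : ∀ i, |γ i| ≤ 1)
    (hB : finrank ℝ E < #{i ∈ Ico A B | |γ i| < 1}) :
    ∃ γ' : ℕ → ℝ, (∀ i, |γ' i| ≤ 1) ∧
      {i ∈ Ico A B | |γ' i| < 1} ⊂ {i ∈ Ico A B | |γ i| < 1} ∧
      (∀ i, |γ i| = 1 → γ' i = γ i) ∧
      ∀ k, #{i ∈ Ico A k | |γ i| < 1} ≤ finrank ℝ E ∨
        ∑ i ∈ Ico A k, (γ' i - γ i) • v i = 0 := by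
  classical
  have hex : ∃ p, finrank ℝ E < #{i ∈ Ico A p | |γ i| < 1} := ⟨B, hB⟩
  obtain ⟨D, hDF, hDcard, hDk⟩ : ∃ D ⊆ {i ∈ Ico A B | |γ i| < 1}, finrank ℝ E < #D ∧
      ∀ k, #{i ∈ Ico A k | |γ i| < 1} ≤ finrank ℝ E ∨ D ⊆ Ico A k :=
    ⟨_, filter_subset_filter _ (Ico_subset_Ico_right (Nat.find_min' hex hB)), Nat.find_spec hex,
      fun k => (lt_or_ge k (Nat.find hex)).imp (fun hk => not_lt.1 (Nat.find_min hex hk))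
        fun hk => (filter_subset _ _).trans (Ico_subset_Ico_right hk)⟩
  obtain ⟨z, hz, j₀, hj₀, hzj₀⟩ := (not_linearIndepOn_finset_iff (v := v)).1 fun hli =>
    hDcard.not_ge (by simpa using hli.fintype_card_le_finrank)
  obtain ⟨t, ht, j, hj, htj⟩ := exists_abs_add_mul_eq_one_s6 (fun i _ => hγ i) ⟨j₀, hj₀, hzj₀⟩
  have hDfrac : ∀ i ∈ D, |γ i| < 1 := fun i hi => (mem_filter.1 (hDF hi)).2
  refine ⟨fun i => if i ∈ D then γ i + t * z i else γ i, fun i => ?_, ?_, fun i hi => ?_,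
    fun k => (hDk k).imp_right fun hDk => ?_⟩
  · dsimp only
    split_ifs with hi
    exacts [ht i hi, hγ i]
  · refine Finset.ssubset_of_subset_of_ssubset (fun i hi => ?_) (erase_ssubset (hDF hj))
    rw [mem_filter] at hi
    by_cases hiD : i ∈ D
    · refine mem_erase.2 ⟨?_, hDF hiD⟩
      rintro rfl
      simp [hiD, htj] at hi
    · refine mem_erase.2 ⟨?_, mem_filter.2 ⟨hi.1, by simpa [hiD] using hi.2⟩⟩
      rintro rfl
      exact hiD hj
  · have hiD : i ∉ D := fun h => (hDfrac i h).ne hi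
    simp [hiD]
  · rw [← sum_subset hDk fun i _ hi => by simp [hi], ← smul_zero t, ← hz, smul_sum]
    exact sum_congr rfl fun i hi => by simp [hi, mul_smul]

theorem exists_signs_norm_sum_Ico_sub_smul_le (v : ℕ → E) {η : ℝ} (hη : 0 ≤ η) (A B : ℕ)
    (γ : ℕ → ℝ) (hγ : ∀ i, |γ i| ≤ 1) (hv : ∀ i ∈ Ico A B, |γ i| < 1 → ‖v i‖ ≤ η) :
    ∃ θ : ℕ → ℝ, (∀ i, |θ i| = 1) ∧ (∀ i, |γ i| = 1 → θ i = γ i) ∧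
      ∀ k ≤ B, ‖∑ i ∈ Ico A k, (θ i - γ i) • v i‖ ≤ finrank ℝ E * (2 * η) := by
  induction hn : #{i ∈ Ico A B | |γ i| < 1} using Nat.strong_induction_on generalizing γ with
  | _ n ih =>
  have hsmall : ∀ θ : ℕ → ℝ, (∀ i, |θ i| = 1) → (∀ i, |γ i| = 1 → θ i = γ i) → ∀ k ≤ B,
      #{i ∈ Ico A k | |γ i| < 1} ≤ finrank ℝ E →
        ‖∑ i ∈ Ico A k, (θ i - γ i) • v i‖ ≤ finrank ℝ E * (2 * η) :=
    fun θ hθ hθγ k hk hd => (norm_sum_sub_smul_le _ hθ hγ hθγ fun i hi =>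
      hv i (Ico_subset_Ico_right hk hi)).trans (by gcongr)
  by_cases hB : #{i ∈ Ico A B | |γ i| < 1} ≤ finrank ℝ E
  · have hθ : ∀ i, |(if γ i < 0 then -1 else 1 : ℝ)| = 1 := fun i => by split_ifs <;> simp
    have hθγ : ∀ i, |γ i| = 1 → (if γ i < 0 then -1 else 1 : ℝ) = γ i := fun i hi => by
      rcases (abs_eq zero_le_one).1 hi with h | h <;> simp [h]
    exact ⟨_, hθ, hθγ, fun k hk => hsmall _ hθ hθγ k hk
      ((card_le_card (filter_subset_filter _ (Ico_subset_Ico_right hk))).trans hB)⟩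
  obtain ⟨γ', hγ', hfrac, hγ'γ, hmove⟩ := exists_fewer_fractional v A B γ hγ (not_le.1 hB)
  obtain ⟨θ, hθ, hθγ', hθsum⟩ := ih _ (hn ▸ card_lt_card hfrac) γ' hγ' (fun i hi hi' =>
    hv i hi (mem_filter.1 (hfrac.subset (mem_filter.2 ⟨hi, hi'⟩))).2) rfl
  have hθγ : ∀ i, |γ i| = 1 → θ i = γ i := fun i hi =>
    (hθγ' i (hγ'γ i hi ▸ hi)).trans (hγ'γ i hi)
  refine ⟨θ, hθ, hθγ, fun k hk => (hmove k).elim (hsmall θ hθ hθγ k hk) fun hzero => ?_⟩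
  calc ‖∑ i ∈ Ico A k, (θ i - γ i) • v i‖
      = ‖∑ i ∈ Ico A k, (θ i - γ' i) • v i + ∑ i ∈ Ico A k, (γ' i - γ i) • v i‖ := by
        rw [← sum_add_distrib]; simp only [← add_smul, sub_add_sub_cancel]
    _ ≤ finrank ℝ E * (2 * η) := by rw [hzero, add_zero]; exact hθsum k hk

theorem exists_signs_tendsto_sum_smul_of_tendsto {a : ℕ → E} (ha : Tendsto a atTop (𝓝 0))
    {γ : ℕ → ℝ} (hγ : ∀ n, |γ n| ≤ 1) {c : ℝ} (hc : 0 < c) (hac : ∀ n, |γ n| < 1 → ‖a n‖ ≤ c)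
    {x : E} (hγx : Tendsto (fun M => ∑ n ∈ range M, γ n • a n) atTop (𝓝 x)) :
    ∃ ε : ℕ → ℝ, (∀ n, |ε n| = 1) ∧ ∃ y, dist y x ≤ 4 * finrank ℝ E * c ∧
      Tendsto (fun M => ∑ n ∈ range M, ε n • a n) atTop (𝓝 y) := by
  obtain ⟨φ, hφ, hφa⟩ := extraction_forall_of_eventually fun k =>
    (eventually_gt_atTop 0).and <| eventually_forall_ge_atTop.2 <|
      (tendsto_zero_iff_norm_tendsto_zero.1 ha).eventually (ge_mem_nhds (by positivity :
        0 < c / 2 ^ (k + 1)))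
  obtain ⟨P, hP0, hPsucc⟩ : ∃ P : ℕ → ℕ, P 0 = 0 ∧ ∀ k, P (k + 1) = φ k :=
    ⟨fun | 0 => 0 | k + 1 => φ k, rfl, fun _ => rfl⟩
  have hP : StrictMono P := strictMono_nat_of_lt_succ fun
    | 0 => by simpa [hP0, hPsucc] using (hφa 0).1
    | k + 1 => by simpa [hPsucc] using hφ k.lt_succ_self
  have hPa : ∀ k n, P k ≤ n → |γ n| < 1 → ‖a n‖ ≤ c / 2 ^ k
    | 0, n, _, hn => by simpa using hac n hn
    | k + 1, n, hkn, _ => (hφa k).2 n (hPsucc k ▸ hkn)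
  choose Θ hΘ _ hΘsum using fun k => (exists_signs_norm_sum_Ico_sub_smul_le a
    (by positivity : 0 ≤ c / 2 ^ k) (P k) (P (k + 1)) γ hγ fun n hn => hPa k n (mem_Ico.1 hn).1)
  choose K hK using fun n => hP.exists_between_of_tendsto_atTop hP.tendsto_atTop (x := n + 1)
    (by simp [hP0])
  have hKeq : ∀ k n, P k ≤ n → n < P (k + 1) → K n = k := fun k n h₁ h₂ => by
    have := hP.lt_iff_lt.1 ((hK n).1.trans_le h₂)
    have := hP.lt_iff_lt.1 (h₁.trans_lt (hK n).2)
    omega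
  obtain ⟨y, hy, hy0⟩ := hP.exists_tendsto_of_dist_le_geometric_two
    (S := fun M => ∑ n ∈ range M, (Θ (K n) n - γ n) • a n) (C := 4 * finrank ℝ E * c)
    fun k M h₁ h₂ => by
      rw [dist_eq_norm', ← sum_Ico_eq_sub _ h₁]
      rw [sum_congr rfl fun n hn => by
        rw [hKeq k n (mem_Ico.1 hn).1 ((mem_Ico.1 hn).2.trans_le h₂)]]
      exact (hΘsum k M h₂).trans_eq (by ring)
  refine ⟨fun n => Θ (K n) n, fun n => hΘ _ n, y + x, by simpa [hP0] using hy0,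
    (hy.add hγx).congr fun M => ?_⟩
  rw [← sum_add_distrib]
  simp only [← add_smul, sub_add_cancel]

end Rounding

theorem IsCompact.exists_forall_le_sum_Ico {X : Type*} [TopologicalSpace X] {K : Set X}
    (hK : IsCompact K) {f : ℕ → X → ℝ} (hf : ∀ n, Continuous (f n)) (hf0 : ∀ n x, 0 ≤ f n x)
    (hKf : ∀ x ∈ K, ¬Summable fun n => f n x) (M : ℝ) (N₀ : ℕ) :
    ∃ N, ∀ x ∈ K, M ≤ ∑ n ∈ Ico N₀ N, f n x := by
  have hcover : K ⊆ ⋃ N, {x | M < ∑ n ∈ Ico N₀ N, f n x} := fun x hx => by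
    have hdiv := (not_summable_iff_tendsto_nat_atTop_of_nonneg (hf0 · x)).1 (hKf x hx)
    have hIco : Tendsto (fun N => ∑ n ∈ Ico N₀ N, f n x) atTop atTop := by
      refine (tendsto_atTop_add_const_right _ (-∑ n ∈ range N₀, f n x) hdiv).congr' ?_
      filter_upwards [eventually_ge_atTop N₀] with N hN
      rw [sum_Ico_eq_sub _ hN, sub_eq_add_neg]
    exact Set.mem_iUnion.2 (hIco.eventually_gt_atTop M).exists
  obtain ⟨N, hN⟩ := hK.elim_directed_cover _
    (fun N => isOpen_lt continuous_const (continuous_finsetSum _ fun n _ => hf n)) hcover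
    (Monotone.directed_le fun N N' h x hx => hx.trans_le (sum_le_sum_of_subset_of_nonneg
      (Ico_subset_Ico_right h) fun n _ _ => hf0 n x))
  exact ⟨N, fun x hx => (hN hx).le⟩

theorem exists_abs_le_one_sum_smul_eq {E : Type*} [NormedAddCommGroup E] [InnerProductSpace ℝ E]
    [CompleteSpace E] {ι : Type*} (s : Finset ι) (v : ι → E) (t : E)
    (ht : ∀ e : E, ‖e‖ = 1 → ‖t‖ ≤ ∑ i ∈ s, |⟪v i, e⟫|) :
    ∃ γ : ι → ℝ, (∀ i, |γ i| ≤ 1) ∧ ∑ i ∈ s, γ i • v i = t := by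
  set L : (ι → ℝ) → E := fun γ => ∑ i ∈ s, γ i • v i
  have hL : IsLinearMap ℝ L :=
    ⟨fun γ γ' => by simp [L, add_smul, sum_add_distrib], fun c γ => by simp [L, smul_sum, mul_smul]⟩
  set box : Set (ι → ℝ) := Set.univ.pi fun _ => Set.Icc (-1) 1
  have hZ : IsCompact (L '' box) := (isCompact_univ_pi fun _ => isCompact_Icc).image
    (continuous_finsetSum _ fun i _ => (continuous_apply i).smul continuous_const)
  by_contra! hne
  have htZ : t ∉ L '' box := by
    rintro ⟨γ, hγ, rfl⟩
    exact hne γ (fun i => abs_le.2 (hγ i trivial)) rfl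
  obtain ⟨f, u, hfZ, hft⟩ := geometric_hahn_banach_closed_point
    ((convex_pi fun _ _ => convex_Icc _ _).is_linear_image hL) hZ.isClosed htZ
  set w := (InnerProductSpace.toDual ℝ E).symm f
  have hw : ∀ y, ⟪w, y⟫ = f y := fun y => InnerProductSpace.toDual_symm_apply
  set σ : ι → ℝ := fun i => if 0 ≤ ⟪v i, w⟫ then 1 else -1
  have hσ : σ ∈ box := fun i _ => by simp only [σ]; split_ifs <;> norm_num
  have hfσ : f (L σ) = ∑ i ∈ s, |⟪v i, w⟫| := by
    rw [← hw, inner_sum]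
    refine sum_congr rfl fun i _ => ?_
    rw [inner_smul_right, real_inner_comm]
    simp only [σ]
    split_ifs with h
    exacts [(one_mul _).trans (abs_of_nonneg h).symm, by simp [abs_of_neg (not_le.1 h)]]
  have hsum : ∑ i ∈ s, |⟪v i, w⟫| < ⟪w, t⟫ := hfσ ▸ hw t ▸ (hfZ _ ⟨σ, hσ, rfl⟩).trans hft
  have hw0 : w ≠ 0 := by
    rintro hw0
    simp [hw0] at hsum
  have hwpos : 0 < ‖w‖ := norm_pos_iff.2 hw0
  have hscale : ∑ i ∈ s, |⟪v i, ‖w‖⁻¹ • w⟫| = ‖w‖⁻¹ * ∑ i ∈ s, |⟪v i, w⟫| := by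
    simp [real_inner_smul_right, abs_mul, mul_sum]
  have hunit : ‖‖w‖⁻¹ • w‖ = 1 := by rw [norm_smul, norm_inv, norm_norm, inv_mul_cancel₀ hwpos.ne']
  have hcap := ht _ hunit
  rw [hscale, le_inv_mul_iff₀ hwpos] at hcap
  exact (hsum.trans_le (real_inner_le_norm w t)).not_ge hcap

theorem dense_setOf_tendsto_sum_sign_smul {E : Type*} [NormedAddCommGroup E]
    [InnerProductSpace ℝ E] [FiniteDimensional ℝ E] {a : ℕ → E} (ha : Tendsto a atTop (𝓝 0))
    (hLS : ∀ e : E, ‖e‖ = 1 → ¬Summable fun n => |⟪a n, e⟫|) :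
    Dense {x : E | ∃ ε : ℕ → ℝ, (∀ n, ε n = 1 ∨ ε n = -1) ∧
      Tendsto (fun N => ∑ n ∈ range N, ε n • a n) atTop (𝓝 x)} := by
  refine Metric.dense_iff.2 fun x δ hδ => ?_
  set c := δ / (4 * finrank ℝ E + 1)
  have hc : 0 < c := by positivity
  obtain ⟨A, hA⟩ := eventually_atTop.1 <|
    (tendsto_zero_iff_norm_tendsto_zero.1 ha).eventually (ge_mem_nhds hc)
  set r := x - ∑ n ∈ range A, a n
  obtain ⟨N, hN⟩ := (isCompact_sphere (0 : E) 1).exists_forall_le_sum_Ico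
    (f := fun n e => |⟪a n, e⟫|) (fun n => by fun_prop) (fun _ _ => abs_nonneg _)
    (fun e he => hLS e (mem_sphere_zero_iff_norm.1 he)) ‖r‖ A
  obtain ⟨γ, hγ, hγr⟩ := exists_abs_le_one_sum_smul_eq (Ico A N) a r
    fun e he => hN e (mem_sphere_zero_iff_norm.2 he)
  set γ' : ℕ → ℝ := fun n => if n < A then 1 else if n < N then γ n else 0
  have hγ' : ∀ n, |γ' n| ≤ 1 := fun n => by
    simp only [γ']; split_ifs <;> simp [hγ n]
  have hγ'a : ∀ n, |γ' n| < 1 → ‖a n‖ ≤ c := fun n hn =>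
    hA n (not_lt.1 fun h => by simp [γ', h] at hn)
  have hγ'sum : ∀ᶠ M in atTop, ∑ n ∈ range M, γ' n • a n = x := by
    filter_upwards [eventually_ge_atTop A, eventually_ge_atTop N] with M hAM hNM
    rw [← sum_range_add_sum_Ico _ hAM, ← sum_subset (Ico_subset_Ico_right hNM)]
    · have hinit : ∑ n ∈ range A, γ' n • a n = ∑ n ∈ range A, a n :=
        sum_congr rfl fun n hn => by simp [γ', mem_range.1 hn]
      have hmid : ∑ n ∈ Ico A N, γ' n • a n = ∑ n ∈ Ico A N, γ n • a n :=
        sum_congr rfl fun n hn => by simp [γ', (mem_Ico.1 hn).1.not_gt, (mem_Ico.1 hn).2]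
      rw [hinit, hmid, hγr, add_sub_cancel]
    · intro n hn hnN
      have hNn : ¬n < N := fun h => hnN (mem_Ico.2 ⟨(mem_Ico.1 hn).1, h⟩)
      simp [γ', (mem_Ico.1 hn).1.not_gt, hNn]
  obtain ⟨ε, hε, y, hy, hlim⟩ := exists_signs_tendsto_sum_smul_of_tendsto ha hγ' hc hγ'a
    (tendsto_const_nhds.congr' (hγ'sum.mono fun _ h => h.symm))
  refine ⟨y, ?_, ε, fun n => (abs_eq zero_le_one).1 (hε n), hlim⟩
  refine Metric.mem_ball.2 (hy.trans_lt ?_)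
  rw [← mul_div_assoc, div_lt_iff₀ (by positivity)]
  linarith

/-- If a null sequence `(aₙ)` in `ℝ^d` satisfies the Lévy–Steinitz condition
`∑ |⟨aₙ, e⟩| = ∞` for every unit vector `e`, then the achievement set
`S(aₙ) = {∑ εₙ aₙ : ε ∈ {-1,1}^ℕ}` is dense in `ℝ^d`. -/
theorem stmt6 (d : ℕ) (a : ℕ → EuclideanSpace ℝ (Fin d))
    (ha : Tendsto a atTop (nhds 0))
    (hLS : ∀ e : EuclideanSpace ℝ (Fin d), ‖e‖ = 1 → ¬ Summable (fun n => |⟪a n, e⟫|)) :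
    Dense {x : EuclideanSpace ℝ (Fin d) | ∃ ε : ℕ → ℝ, (∀ n, ε n = 1 ∨ ε n = -1) ∧
      Tendsto (fun N => ∑ n ∈ Finset.range N, ε n • a n) atTop (nhds x)} :=
  dense_setOf_tendsto_sum_sign_smul ha hLS
end

section
/- There exists a null sequence (a_n) in R^2 such that ∑_{n=1}^∞ |⟨a_n, e⟩| = ∞ for every unit vector e ∈ S^1, yet the achievement set S(a_n) = {∑_{n=1}^∞ ε_n a_n : ε ∈ {-1,1}^N, the series converges} is not all of R^2. -/
open Filter Finset
open scoped RealInnerProductSpace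
open Topology

/-!
Block `k` of the sequence consists of `2 ^ (k * (k + 1))` copies of
`v k = (2⁻¹ ^ k, 2⁻¹ ^ (k * (k + 1)))`. Along any `e = (e₀, e₁) ≠ 0`, block `k` contributes
`|2 ^ (k * k) * e₀ + e₁|` to `∑ |⟪aₙ, e⟫|`, which does not tend to `0`.

Let `∑ σₙ aₙ` converge, with integer coefficients `σₙ`, and let `m k ∈ ℤ` be the sum of the
coefficients over block `k`. The first coordinate forces `m k * 2⁻¹ ^ k → 0`, so eventually
`|m k| ≤ 2 ^ k`, and the second coordinate of the limit then lies within
`2⁻¹ ^ (K * (K + 1)) * 2⁻¹ ^ K` of `∑_{k ≤ K} m k * 2⁻¹ ^ (k * (k + 1)) ∈ 2⁻¹ ^ (K * (K + 1)) ℤ`.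
As `1 / 3` is at distance `2⁻¹ ^ (K * (K + 1)) / 3` from that lattice, `(0, 1 / 3)` is not a sum.
-/

noncomputable section

section Series

variable {G : Type*} [AddCommGroup G] [TopologicalSpace G] [IsTopologicalAddGroup G]

lemma sum_range_eq_sum_sum_Ico {M : Type*} [AddCommMonoid M] (f : ℕ → M) {b : ℕ → ℕ}
    (hb : Monotone b) (hb0 : b 0 = 0) (K : ℕ) :
    ∑ n ∈ range (b K), f n = ∑ k ∈ range K, ∑ n ∈ Ico (b k) (b (k + 1)), f n := by
  induction K with
  | zero => simp [hb0]
  | succ K ih => rw [sum_range_succ, ← ih, sum_range_add_sum_Ico _ (hb K.le_succ)]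

lemma tendsto_zero_of_tendsto_sum_range {f : ℕ → G} {a : G}
    (hf : Tendsto (fun n => ∑ i ∈ range n, f i) atTop (𝓝 a)) : Tendsto f atTop (𝓝 0) := by
  simpa [sum_range_succ] using (hf.comp (tendsto_add_atTop_nat 1)).sub hf

lemma tendsto_sum_Ico_of_summable {f : ℕ → G} (hf : Summable f) {b : ℕ → ℕ} (hb : Monotone b)
    (hb' : Tendsto b atTop atTop) :
    Tendsto (fun k => ∑ n ∈ Ico (b k) (b (k + 1)), f n) atTop (𝓝 0) := by
  have h := hf.hasSum.tendsto_sum_nat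
  simpa [sum_Ico_eq_sub _ (hb (Nat.le_succ _))] using
    (h.comp (hb'.comp (tendsto_add_atTop_nat 1))).sub (h.comp hb')

end Series

lemma abs_sub_sum_range_le {f : ℕ → ℝ} {L : ℝ}
    (hf : Tendsto (fun J => ∑ k ∈ range J, f k) atTop (𝓝 L)) {K : ℕ} {C : ℝ}
    (hC : ∀ k ≥ K, |f k| ≤ C * 2⁻¹ ^ k) :
    |L - ∑ k ∈ range K, f k| ≤ 2 * C * 2⁻¹ ^ K := by
  have hC0 : 0 ≤ C :=
    nonneg_of_mul_nonneg_left ((abs_nonneg _).trans (hC K le_rfl)) (by positivity)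
  have hJ : ∀ J ≥ K, |∑ k ∈ range J, f k - ∑ k ∈ range K, f k| ≤ 2 * C * 2⁻¹ ^ K := by
    intro J hJ
    rw [← sum_Ico_eq_sub _ hJ]
    calc |∑ k ∈ Ico K J, f k|
        ≤ ∑ k ∈ Ico K J, C * 2⁻¹ ^ k :=
          (abs_sum_le_sum_abs _ _).trans (sum_le_sum fun k hk => hC k (mem_Ico.mp hk).1)
      _ = C * ∑ k ∈ Ico K J, (2⁻¹ : ℝ) ^ k := (mul_sum _ _ _).symm
      _ ≤ C * (2⁻¹ ^ K / (1 - 2⁻¹)) := by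
          gcongr; exact geom_sum_Ico_le_of_lt_one (by norm_num) (by norm_num)
      _ = 2 * C * 2⁻¹ ^ K := by ring
  exact le_of_tendsto (hf.sub_const _).abs (eventually_atTop.mpr ⟨K, hJ⟩)

lemma eq_zero_of_tendsto_mul_add {c : ℕ → ℝ} (hc : Tendsto c atTop atTop) {x y : ℝ}
    (h : Tendsto (fun k => c k * x + y) atTop (𝓝 0)) : x = 0 ∧ y = 0 := by
  have hinv := hc.inv_tendsto_atTop
  have hx : Tendsto (fun k => (c k)⁻¹ * (c k * x + y)) atTop (𝓝 x) := by
    refine (by simpa using (hinv.mul_const y).const_add x :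
      Tendsto (fun k => x + (c k)⁻¹ * y) atTop (𝓝 x)).congr' ?_
    filter_upwards [hc.eventually_gt_atTop 0] with k hk
    field_simp
  obtain rfl : x = 0 := tendsto_nhds_unique hx (by simpa using hinv.mul h)
  exact ⟨rfl, by simpa using h⟩

lemma inv_two_pow_div_three_le_abs_sub (M : ℕ) (z : ℤ) :
    (2⁻¹ : ℝ) ^ M / 3 ≤ |1 / 3 - (z : ℝ) * 2⁻¹ ^ M| := by
  have hne : (2 : ℤ) ^ M - 3 * z ≠ 0 := fun h =>
    absurd (Int.prime_three.dvd_of_dvd_pow (⟨z, by linarith⟩ : (3 : ℤ) ∣ 2 ^ M)) (by decide)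
  have h1 : (1 : ℝ) ≤ |2 ^ M - 3 * (z : ℝ)| := by exact_mod_cast Int.one_le_abs hne
  have heq : 1 / 3 - (z : ℝ) * 2⁻¹ ^ M = (2 ^ M - 3 * z) / 3 * 2⁻¹ ^ M := by
    rw [inv_pow]; field_simp
  rw [heq, abs_mul, abs_div, abs_of_pos (by positivity : (0 : ℝ) < 2⁻¹ ^ M),
    abs_of_pos (by norm_num : (0 : ℝ) < 3)]
  nlinarith [pow_pos (by norm_num : (0 : ℝ) < 2⁻¹) M]

lemma exists_sum_eq_intCast_mul_inv_two_pow (m : ℕ → ℤ) (d : ℕ → ℕ) {K M : ℕ}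
    (hd : ∀ k < K, d k ≤ M) : ∃ z : ℤ, ∑ k ∈ range K, (m k : ℝ) * 2⁻¹ ^ d k = z * 2⁻¹ ^ M := by
  refine ⟨∑ k ∈ range K, m k * 2 ^ (M - d k), ?_⟩
  push_cast
  rw [sum_mul]
  refine sum_congr rfl fun k hk => ?_
  obtain ⟨j, hj⟩ := Nat.exists_eq_add_of_le (hd k (mem_range.mp hk))
  rw [hj, Nat.add_sub_cancel_left, pow_add, mul_assoc, mul_left_comm ((2 : ℝ) ^ j),
    ← mul_pow, mul_inv_cancel₀ two_ne_zero, one_pow, mul_one]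

def blockStart (k : ℕ) : ℕ := ∑ j ∈ range k, 2 ^ (j * (j + 1))

lemma blockStart_zero : blockStart 0 = 0 := sum_range_zero _

lemma blockStart_succ (k : ℕ) : blockStart (k + 1) = blockStart k + 2 ^ (k * (k + 1)) :=
  sum_range_succ _ _

lemma blockStart_strictMono : StrictMono blockStart :=
  strictMono_nat_of_lt_succ fun k => by
    rw [blockStart_succ]; exact Nat.lt_add_of_pos_right (by positivity)

lemma card_Ico_blockStart (k : ℕ) :
    #(Ico (blockStart k) (blockStart (k + 1))) = 2 ^ (k * (k + 1)) := by
  rw [Nat.card_Ico, blockStart_succ, Nat.add_sub_cancel_left]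

def blockIndex (n : ℕ) : ℕ := Nat.findGreatest (fun k => blockStart k ≤ n) n

lemma blockIndex_eq_of_mem {k n : ℕ} (hn : n ∈ Ico (blockStart k) (blockStart (k + 1))) :
    blockIndex n = k := by
  rw [mem_Ico] at hn
  refine Nat.findGreatest_eq_iff.mpr ⟨(blockStart_strictMono.id_le k).trans hn.1, fun _ => hn.1,
    fun j hj _ hj' => ?_⟩
  exact absurd (hn.2.trans_le (blockStart_strictMono.monotone hj)) (not_lt.mpr hj')

lemma tendsto_blockIndex : Tendsto blockIndex atTop atTop :=
  tendsto_atTop_atTop.mpr fun k => ⟨blockStart k, fun _ hn =>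
    Nat.le_findGreatest ((blockStart_strictMono.id_le k).trans hn) hn⟩

def blockVec (k : ℕ) : EuclideanSpace ℝ (Fin 2) := !₂[2⁻¹ ^ k, 2⁻¹ ^ (k * (k + 1))]

def blockSeq (n : ℕ) : EuclideanSpace ℝ (Fin 2) := blockVec (blockIndex n)

lemma blockSeq_eq_of_mem {k n : ℕ} (hn : n ∈ Ico (blockStart k) (blockStart (k + 1))) :
    blockSeq n = blockVec k := by
  rw [blockSeq, blockIndex_eq_of_mem hn]

lemma tendsto_blockVec : Tendsto blockVec atTop (𝓝 0) := by
  have hpow := tendsto_pow_atTop_nhds_zero_of_lt_one (by norm_num : (0 : ℝ) ≤ 2⁻¹) (by norm_num)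
  have hexp : Tendsto (fun k : ℕ => k * (k + 1)) atTop atTop :=
    tendsto_atTop_mono (fun k => Nat.le_mul_of_pos_right k k.succ_pos) tendsto_id
  have h : Tendsto (fun k => ![(2⁻¹ : ℝ) ^ k, 2⁻¹ ^ (k * (k + 1))]) atTop (𝓝 ![0, 0]) :=
    tendsto_pi_nhds.mpr <| Fin.forall_fin_two.mpr
      ⟨by simpa using hpow, by simpa [Function.comp_def] using hpow.comp hexp⟩
  rw [← (by simp : !₂[(0 : ℝ), 0] = (0 : EuclideanSpace ℝ (Fin 2)))]
  exact ((PiLp.continuous_toLp 2 _).tendsto _).comp h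

lemma tendsto_blockSeq : Tendsto blockSeq atTop (𝓝 0) :=
  tendsto_blockVec.comp tendsto_blockIndex

lemma inner_blockVec (k : ℕ) (e : EuclideanSpace ℝ (Fin 2)) :
    ⟪blockVec k, e⟫ = 2⁻¹ ^ k * e 0 + 2⁻¹ ^ (k * (k + 1)) * e 1 := by
  simp [blockVec, PiLp.inner_apply, Fin.sum_univ_two, mul_comm]

lemma sum_Ico_blockStart_abs_inner (k : ℕ) (e : EuclideanSpace ℝ (Fin 2)) :
    ∑ n ∈ Ico (blockStart k) (blockStart (k + 1)), |⟪blockSeq n, e⟫|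
      = |2 ^ (k * k) * e 0 + e 1| := by
  rw [sum_congr rfl fun n hn => by rw [blockSeq_eq_of_mem hn], sum_const, card_Ico_blockStart,
    nsmul_eq_mul, inner_blockVec, Nat.cast_pow, Nat.cast_ofNat,
    ← abs_of_pos (by positivity : (0 : ℝ) < 2 ^ (k * (k + 1))), ← abs_mul]
  have h1 : (2 : ℝ) ^ (k * (k + 1)) * 2⁻¹ ^ (k * (k + 1)) = 1 := by
    rw [inv_pow, mul_inv_cancel₀ (by positivity)]
  have h2 : (2 : ℝ) ^ (k * (k + 1)) * 2⁻¹ ^ k = 2 ^ (k * k) := by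
    rw [mul_add_one, pow_add, inv_pow, mul_inv_cancel_right₀ (by positivity)]
  congr 1
  linear_combination e 0 * h2 + e 1 * h1

lemma not_summable_abs_inner_blockSeq {e : EuclideanSpace ℝ (Fin 2)} (he : e ≠ 0) :
    ¬ Summable fun n => |⟪blockSeq n, e⟫| := by
  intro hs
  have h := tendsto_sum_Ico_of_summable hs blockStart_strictMono.monotone
    blockStart_strictMono.tendsto_atTop
  simp_rw [sum_Ico_blockStart_abs_inner] at h
  obtain ⟨h0, h1⟩ := eq_zero_of_tendsto_mul_add
    ((tendsto_pow_atTop_atTop_of_one_lt one_lt_two).comp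
      (tendsto_atTop_mono Nat.le_mul_self tendsto_id))
    ((tendsto_zero_iff_abs_tendsto_zero _).mpr h)
  exact he (by ext i; fin_cases i <;> simp [h0, h1])

def blockSum (σ : ℕ → ℤ) (k : ℕ) : ℤ := ∑ n ∈ Ico (blockStart k) (blockStart (k + 1)), σ n

lemma sum_range_blockStart_smul_blockSeq (σ : ℕ → ℤ) (K : ℕ) :
    ∑ n ∈ range (blockStart K), (σ n : ℝ) • blockSeq n
      = ∑ k ∈ range K, (blockSum σ k : ℝ) • blockVec k := by
  rw [sum_range_eq_sum_sum_Ico _ blockStart_strictMono.monotone blockStart_zero]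
  refine sum_congr rfl fun k _ => ?_
  rw [blockSum, Int.cast_sum, sum_smul]
  exact sum_congr rfl fun n hn => by rw [blockSeq_eq_of_mem hn]

lemma abs_sub_sum_range_succ_le {m : ℕ → ℤ} {L : ℝ}
    (hL : Tendsto (fun J => ∑ k ∈ range J, (m k : ℝ) * 2⁻¹ ^ (k * (k + 1))) atTop (𝓝 L))
    {K : ℕ} (hm : ∀ k > K, |(m k : ℝ) * 2⁻¹ ^ k| ≤ 1) :
    |L - ∑ k ∈ range (K + 1), (m k : ℝ) * 2⁻¹ ^ (k * (k + 1))|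
      ≤ 2⁻¹ ^ (K * (K + 1)) * 2⁻¹ ^ K := by
  refine (abs_sub_sum_range_le hL (C := 2⁻¹ ^ (K * (K + 1))) fun k hk => ?_).trans_eq (by ring)
  have hexp : K * (K + 1) + k ≤ k * k := by nlinarith
  calc |(m k : ℝ) * 2⁻¹ ^ (k * (k + 1))| = |(m k : ℝ) * 2⁻¹ ^ k| * 2⁻¹ ^ (k * k) := by
        rw [mul_add_one, pow_add, mul_comm (2⁻¹ ^ (k * k) : ℝ), ← mul_assoc,
          abs_mul _ (2⁻¹ ^ (k * k)), abs_of_pos (by positivity : (0 : ℝ) < 2⁻¹ ^ (k * k))]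
    _ ≤ 1 * 2⁻¹ ^ (K * (K + 1) + k) :=
        mul_le_mul (hm k hk) (pow_le_pow_of_le_one (by norm_num) (by norm_num) hexp)
          (by positivity) zero_le_one
    _ = 2⁻¹ ^ (K * (K + 1)) * 2⁻¹ ^ k := by rw [one_mul, pow_add]

lemma not_tendsto_sum_intCast_smul_blockSeq (σ : ℕ → ℤ) :
    ¬ Tendsto (fun N => ∑ n ∈ range N, (σ n : ℝ) • blockSeq n) atTop (𝓝 !₂[0, 1 / 3]) := by
  intro h
  set m := blockSum σ
  have hblocks : Tendsto (fun K => ∑ k ∈ range K, (m k : ℝ) • blockVec k) atTop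
      (𝓝 !₂[0, 1 / 3]) := by
    simpa only [Function.comp_def, sum_range_blockStart_smul_blockSeq] using
      h.comp blockStart_strictMono.tendsto_atTop
  have hX : Tendsto (fun K => ∑ k ∈ range K, (m k : ℝ) * 2⁻¹ ^ k) atTop (𝓝 0) := by
    simpa [blockVec, Function.comp_def] using
      ((EuclideanSpace.proj (0 : Fin 2)).continuous.tendsto _).comp hblocks
  have hY : Tendsto (fun K => ∑ k ∈ range K, (m k : ℝ) * 2⁻¹ ^ (k * (k + 1))) atTop
      (𝓝 (1 / 3)) := by
    simpa [blockVec, Function.comp_def] using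
      ((EuclideanSpace.proj (1 : Fin 2)).continuous.tendsto _).comp hblocks
  obtain ⟨K₁, hK₁⟩ : ∃ K₁, ∀ k ≥ K₁, |(m k : ℝ) * 2⁻¹ ^ k| ≤ 1 := eventually_atTop.mp <|
    (tendsto_zero_of_tendsto_sum_range hX).abs.eventually (ge_mem_nhds (by simp))
  set K := max K₁ 2
  have hupper := abs_sub_sum_range_succ_le hY (K := K) fun k hk => hK₁ k (by omega)
  obtain ⟨z, hz⟩ := exists_sum_eq_intCast_mul_inv_two_pow m (fun k => k * (k + 1))
    (K := K + 1) (M := K * (K + 1)) fun k hk => Nat.mul_le_mul (by omega) (by omega)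
  have hlower := inv_two_pow_div_three_le_abs_sub (K * (K + 1)) z
  rw [← hz] at hlower
  have hK : (1 / 3 : ℝ) ≤ 2⁻¹ ^ K := le_of_mul_le_mul_left (by linarith [hlower.trans hupper])
    (by positivity : (0 : ℝ) < 2⁻¹ ^ (K * (K + 1)))
  have hK2 : (2⁻¹ : ℝ) ^ K ≤ 2⁻¹ ^ 2 :=
    pow_le_pow_of_le_one (by norm_num) (by norm_num) (le_max_right _ _)
  linarith [hK.trans hK2, show (2⁻¹ : ℝ) ^ 2 = 1 / 4 by norm_num]

end

/-- There is a null sequence `(aₙ)` in `ℝ²` satisfying the Lévy–Steinitz condition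
(`∑ |⟨aₙ, e⟩| = ∞` for every unit vector `e`) whose achievement set of signed sums
is not all of `ℝ²`. -/
theorem stmt7 :
    ∃ a : ℕ → EuclideanSpace ℝ (Fin 2),
      Tendsto a atTop (nhds 0) ∧
      (∀ e : EuclideanSpace ℝ (Fin 2), ‖e‖ = 1 → ¬ Summable (fun n => |⟪a n, e⟫|)) ∧
      {x : EuclideanSpace ℝ (Fin 2) | ∃ ε : ℕ → ℝ, (∀ n, ε n = 1 ∨ ε n = -1) ∧
        Tendsto (fun N => ∑ n ∈ Finset.range N, ε n • a n) atTop (nhds x)} ≠ Set.univ := by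
  refine ⟨blockSeq, tendsto_blockSeq, fun e he => not_summable_abs_inner_blockSeq ?_, ?_⟩
  · rintro rfl
    simp at he
  intro h
  obtain ⟨ε, hε, hlim⟩ := Set.eq_univ_iff_forall.mp h !₂[0, 1 / 3]
  obtain ⟨σ, rfl⟩ : ∃ σ : ℕ → ℤ, ε = fun n => (σ n : ℝ) :=
    ⟨fun n => if ε n = 1 then 1 else -1, funext fun n => by rcases hε n with h | h <;> simp [h]⟩
  exact not_tendsto_sum_intCast_smul_blockSeq σ hlim
end

section
/- Let (a_n) be a null sequence in R^d with a_n ≠ 0 for all n, and let u be a unit vector. Suppose there exist an index set I ⊂ N and sequences (α_n) of positive reals and (ω_n) in R^d such that a_n = α_n u + ω_n for all n ∈ I, with ∑_{n∈I} α_n = ∞ and ∑_{n∈I} ‖ω_n‖ < ∞. Then u is a Lévy vector of (a_n), i.e., for every ε > 0, ∑_{n=1}^∞ ‖a_n‖ · χ(a_n/‖a_n‖ ∈ B(u,ε)) = ∞. -/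
open Filter Finset Classical

/-- If a null sequence `(aₙ)` in `ℝ^d` of nonzero vectors admits a decomposition
`aₙ = αₙ u + ωₙ` on an index set `I` with `∑_{n∈I} αₙ = ∞` and `∑_{n∈I} ‖ωₙ‖ < ∞`,
then `u` is a Lévy vector of `(aₙ)`: for every `δ > 0` the sum of `‖aₙ‖` over those `n`
with `aₙ/‖aₙ‖ ∈ B(u,δ)` diverges. -/
theorem stmt8 (d : ℕ) (a : ℕ → EuclideanSpace ℝ (Fin d))
    (ha : Tendsto a atTop (nhds 0)) (hne : ∀ n, a n ≠ 0)
    (u : EuclideanSpace ℝ (Fin d)) (hu : ‖u‖ = 1)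
    (I : Set ℕ) (α : ℕ → ℝ) (ω : ℕ → EuclideanSpace ℝ (Fin d))
    (hα : ∀ n ∈ I, 0 < α n)
    (hdec : ∀ n ∈ I, a n = α n • u + ω n)
    (hαdiv : ¬ Summable (fun n : I => α n))
    (hωsum : Summable (fun n : I => ‖ω n‖)) :
    ∀ δ : ℝ, 0 < δ →
      ¬ Summable (fun n => if ‖a n‖⁻¹ • a n ∈ Metric.ball u δ then ‖a n‖ else 0) := by
  intro δ hδ hsum
  set c : ℝ := min (δ/5) (1/2) with hc
  have hc0 : 0 < c := lt_min (by linarith) (by norm_num)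
  have hc2 : c ≤ 1/2 := min_le_right _ _
  have hcδ : 4*c < δ := by
    have h1 : c ≤ δ/5 := min_le_left _ _
    linarith
  set S : Set ℕ := {n | n ∈ I ∧ ‖ω n‖ ≤ c * α n} with hS
  have hSI : S ⊆ I := fun n hn => hn.1
  set f : ℕ → ℝ := fun n => if ‖a n‖⁻¹ • a n ∈ Metric.ball u δ then ‖a n‖ else 0 with hf
  have hf0 : ∀ n, 0 ≤ f n := by
    intro n; simp only [hf]; split <;> positivity
  -- key estimates on S
  have key : ∀ n ∈ S, α n / 2 ≤ ‖a n‖ ∧ ‖a n‖⁻¹ • a n ∈ Metric.ball u δ := by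
    intro n hn
    obtain ⟨hnI, hω⟩ := hn
    have hα0 : 0 < α n := hα n hnI
    have hA : a n = α n • u + ω n := hdec n hnI
    have hαu : ‖α n • u‖ = α n := by
      rw [norm_smul, hu, Real.norm_eq_abs, abs_of_pos hα0, mul_one]
    have h1 : α n - ‖a n‖ ≤ ‖ω n‖ := by
      have h0 := norm_sub_norm_le (α n • u) (a n)
      have h2 : α n • u - a n = -(ω n) := by rw [hA]; abel
      rw [h2, norm_neg, hαu] at h0
      exact h0
    have hr : α n / 2 ≤ ‖a n‖ := by
      have : c * α n ≤ α n / 2 := by nlinarith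
      linarith
    refine ⟨hr, ?_⟩
    have hrpos : 0 < ‖a n‖ := lt_of_lt_of_le (by linarith) hr
    have h3 : ‖a n - ‖a n‖ • u‖ ≤ 2 * ‖ω n‖ := by
      have e1 : a n - ‖a n‖ • u = ω n + (α n - ‖a n‖) • u := by
        rw [hA, sub_smul]; abel
      calc ‖a n - ‖a n‖ • u‖ = ‖ω n + (α n - ‖a n‖) • u‖ := by rw [e1]
        _ ≤ ‖ω n‖ + ‖(α n - ‖a n‖) • u‖ := norm_add_le _ _
        _ = ‖ω n‖ + |α n - ‖a n‖| := by rw [norm_smul, hu, mul_one, Real.norm_eq_abs]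
        _ ≤ ‖ω n‖ + ‖ω n‖ := by
            have h4 : ‖a n‖ - α n ≤ ‖ω n‖ := by
              have h0 := norm_sub_norm_le (a n) (α n • u)
              have e2 : a n - α n • u = ω n := by rw [hA]; abel
              rw [e2, hαu] at h0; exact h0
            have := abs_sub_le_iff.mpr ⟨h1, h4⟩
            linarith [this]
        _ = 2 * ‖ω n‖ := by ring
    have h5 : ‖‖a n‖⁻¹ • a n - u‖ = ‖a n‖⁻¹ * ‖a n - ‖a n‖ • u‖ := by
      rw [← norm_smul_of_nonneg (by positivity : (0:ℝ) ≤ ‖a n‖⁻¹)]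
      congr 1
      rw [smul_sub, smul_smul, inv_mul_cancel₀ (ne_of_gt hrpos), one_smul]
    rw [Metric.mem_ball, dist_eq_norm, h5]
    have h6 : ‖a n‖⁻¹ * ‖a n - ‖a n‖ • u‖ ≤ (α n / 2)⁻¹ * (2 * (c * α n)) := by
      apply mul_le_mul
      · exact inv_anti₀ (by linarith) hr
      · linarith
      · positivity
      · positivity
    have h7 : (α n / 2)⁻¹ * (2 * (c * α n)) = 4 * c := by
      field_simp; ring
    linarith [h6, h7.le, h7.ge]
  -- summability of α over S
  have hSsum : Summable (S.indicator α) := by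
    apply Summable.of_nonneg_of_le
      (fun n => Set.indicator_nonneg (fun m hm => (hα m (hSI hm)).le) n)
      (fun n => ?_) (hsum.mul_left 2)
    by_cases hn : n ∈ S
    · rw [Set.indicator_of_mem hn]
      obtain ⟨hle, hmem⟩ := key n hn
      have hfn : f n = ‖a n‖ := by simp only [hf, if_pos hmem]
      rw [hfn]; linarith
    · rw [Set.indicator_of_notMem hn]
      linarith [hf0 n]
  -- summability of α over I \ S
  have hωind : Summable (I.indicator (fun n => ‖ω n‖)) := by
    rwa [← summable_subtype_iff_indicator]
  have hDsum : Summable ((I \ S).indicator α) := by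
    apply Summable.of_nonneg_of_le
      (fun n => Set.indicator_nonneg (fun m hm => (hα m hm.1).le) n)
      (fun n => ?_) (hωind.mul_left c⁻¹)
    by_cases hn : n ∈ I \ S
    · rw [Set.indicator_of_mem hn]
      obtain ⟨hnI, hnS⟩ := hn
      have hω : c * α n < ‖ω n‖ := by
        by_contra h
        exact hnS ⟨hnI, not_lt.mp h⟩
      rw [Set.indicator_of_mem hnI]
      rw [le_inv_mul_iff₀ hc0] at *
      linarith
    · rw [Set.indicator_of_notMem hn]
      exact mul_nonneg (inv_nonneg.mpr hc0.le)
        (Set.indicator_nonneg (fun m _ => norm_nonneg _) n)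
  -- combine
  apply hαdiv
  rw [show (fun n : I => α n) = α ∘ ((↑) : I → ℕ) from rfl,
    summable_subtype_iff_indicator]
  have hunion : I = S ∪ (I \ S) := (Set.union_diff_cancel hSI).symm
  rw [hunion, Set.indicator_union_of_disjoint disjoint_sdiff_self_right]
  exact hSsum.add hDsum
end

section
/- Let (a_n) be a null sequence in R^d with a_n ≠ 0 for all n, and let u ∈ S^{d-1} be a Lévy vector of (a_n), i.e., for every ε > 0, ∑_{n=1}^∞ ‖a_n‖ · χ(a_n/‖a_n‖ ∈ B(u,ε)) = ∞. Then there exist an index set I ⊂ N and sequences (α_n) of positive reals and (ω_n) in R^d such that a_n = α_n u + ω_n for all n ∈ I, with ∑_{n∈I} α_n = ∞ and ∑_{n∈I} ‖ω_n‖ < ∞. -/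
open Filter Finset Classical RealInnerProductSpace


lemma exists_block (d : ℕ) (a : ℕ → EuclideanSpace ℝ (Fin d))
    (ha : Tendsto a atTop (nhds 0))
    (u : EuclideanSpace ℝ (Fin d))
    (hLevy : ∀ δ : ℝ, 0 < δ →
      ¬ Summable (fun n => if ‖a n‖⁻¹ • a n ∈ Metric.ball u δ then ‖a n‖ else 0))
    (δ : ℝ) (hδ : 0 < δ) (N : ℕ) :
    ∃ S : Finset ℕ, (∀ n ∈ S, N ≤ n ∧ ‖a n‖⁻¹ • a n ∈ Metric.ball u δ) ∧
      1 ≤ ∑ n ∈ S, ‖a n‖ ∧ ∑ n ∈ S, ‖a n‖ ≤ 2 := by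
  classical
  -- find N₁ ≥ N with ‖a n‖ ≤ 1 for n ≥ N₁
  obtain ⟨N₂, hN₂⟩ := (Metric.tendsto_atTop.1 ha) 1 one_pos
  set N₁ := max N N₂ with hN₁def
  have hsmall : ∀ n, N₁ ≤ n → ‖a n‖ ≤ 1 := by
    intro n hn
    have := hN₂ n (le_trans (le_max_right _ _) hn)
    simpa [dist_eq_norm] using this.le
  set f : ℕ → ℝ := fun n => if ‖a n‖⁻¹ • a n ∈ Metric.ball u δ then ‖a n‖ else 0 with hf
  have hf0 : ∀ n, 0 ≤ f n := by
    intro n; simp only [hf]; split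
    · exact norm_nonneg _
    · exact le_refl 0
  have hfle : ∀ n, f n ≤ ‖a n‖ := by
    intro n; simp only [hf]; split
    · exact le_refl _
    · exact norm_nonneg _
  have hns : ¬ Summable (fun i => f (i + N₁)) := by
    rw [summable_nat_add_iff]; exact hLevy δ hδ
  have htend : Tendsto (fun m => ∑ i ∈ range m, f (i + N₁)) atTop atTop :=
    (not_summable_iff_tendsto_nat_atTop_of_nonneg (fun i => hf0 _)).1 hns
  have hex : ∃ m, 1 ≤ ∑ i ∈ range m, f (i + N₁) :=
    (htend.eventually_ge_atTop 1).exists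
  set m := Nat.find hex with hm
  have hm1 : 1 ≤ ∑ i ∈ range m, f (i + N₁) := Nat.find_spec hex
  have hmpos : 0 < m := by
    rcases Nat.eq_zero_or_pos m with h | h
    · exfalso; rw [h] at hm1; simp at hm1; linarith
    · exact h
  have hm2 : ∑ i ∈ range m, f (i + N₁) ≤ 2 := by
    have hlt : ¬ (1 ≤ ∑ i ∈ range (m - 1), f (i + N₁)) := Nat.find_min hex (by omega)
    push_neg at hlt
    have : m = (m - 1) + 1 := by omega
    rw [this, Finset.sum_range_succ]
    have : f (m - 1 + N₁) ≤ 1 := le_trans (hfle _) (hsmall _ (by omega))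
    linarith
  refine ⟨(Finset.Ico N₁ (N₁ + m)).filter (fun n => ‖a n‖⁻¹ • a n ∈ Metric.ball u δ), ?_, ?_, ?_⟩
  · intro n hn
    simp only [Finset.mem_filter, Finset.mem_Ico] at hn
    exact ⟨le_trans (le_max_left _ _) hn.1.1, hn.2⟩
  all_goals {
    have key : ∑ n ∈ (Finset.Ico N₁ (N₁ + m)).filter
        (fun n => ‖a n‖⁻¹ • a n ∈ Metric.ball u δ), ‖a n‖
        = ∑ i ∈ range m, f (i + N₁) := by
      rw [Finset.sum_filter, Finset.sum_Ico_eq_sum_range]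
      simp only [Nat.add_sub_cancel_left]
      exact Finset.sum_congr rfl (fun i _ => by simp only [hf]; rw [add_comm])
    rw [key]
    first | exact hm1 | exact hm2 }

lemma geo_lemma (d : ℕ) (v u : EuclideanSpace ℝ (Fin d)) (hv : ‖v‖ = 1) (hu : ‖u‖ = 1)
    (hclose : ‖v - u‖ ≤ 1/2) :
    (1/2 : ℝ) ≤ ⟪v, u⟫ ∧ ‖v - ⟪v, u⟫ • u‖ ≤ ‖v - u‖ := by
  set c : ℝ := ⟪v, u⟫ with hc
  have hsq : ‖v - u‖ ^ 2 = 2 - 2 * c := by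
    rw [norm_sub_sq_real, hv, hu, ← hc]; ring
  have hcle : c ≤ 1 := by
    have := real_inner_le_norm v u; rw [hv, hu] at this; simpa using this
  have hsqle : ‖v - u‖ ^ 2 ≤ (1/2) ^ 2 :=
    pow_le_pow_left₀ (norm_nonneg _) hclose 2
  have hc2 : (1/2 : ℝ) ≤ c := by nlinarith
  refine ⟨hc2, ?_⟩
  have h1 : ‖v - c • u‖ ^ 2 = 1 - c ^ 2 := by
    rw [norm_sub_sq_real, hv, norm_smul, hu, real_inner_smul_right, ← hc]
    rw [Real.norm_eq_abs, mul_one, sq_abs]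
    ring
  have h2 : ‖v - c • u‖ ^ 2 ≤ ‖v - u‖ ^ 2 := by nlinarith
  have := Real.sqrt_le_sqrt h2
  rwa [Real.sqrt_sq (norm_nonneg _), Real.sqrt_sq (norm_nonneg _)] at this

/-- If `u` is a Lévy vector of a null sequence `(aₙ)` of nonzero vectors in `ℝ^d`
(i.e. for every `δ > 0` the sum of `‖aₙ‖` over those `n` with `aₙ/‖aₙ‖ ∈ B(u,δ)` diverges),
then there are an index set `I` and decompositions `aₙ = αₙ u + ωₙ` (`n ∈ I`) with `αₙ > 0`,
`∑_{n∈I} αₙ = ∞` and `∑_{n∈I} ‖ωₙ‖ < ∞`. -/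
theorem stmt9 (d : ℕ) (a : ℕ → EuclideanSpace ℝ (Fin d))
    (ha : Tendsto a atTop (nhds 0)) (hne : ∀ n, a n ≠ 0)
    (u : EuclideanSpace ℝ (Fin d)) (hu : ‖u‖ = 1)
    (hLevy : ∀ δ : ℝ, 0 < δ →
      ¬ Summable (fun n => if ‖a n‖⁻¹ • a n ∈ Metric.ball u δ then ‖a n‖ else 0)) :
    ∃ (I : Set ℕ) (α : ℕ → ℝ) (ω : ℕ → EuclideanSpace ℝ (Fin d)),
      (∀ n ∈ I, 0 < α n) ∧
      (∀ n ∈ I, a n = α n • u + ω n) ∧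
      ¬ Summable (fun n : I => α n) ∧
      Summable (fun n : I => ‖ω n‖) := by
  classical
  have Hb : ∀ (k N : ℕ), ∃ S : Finset ℕ,
      (∀ n ∈ S, N ≤ n ∧ ‖a n‖⁻¹ • a n ∈ Metric.ball u ((1/2:ℝ) ^ (k+1))) ∧
      1 ≤ ∑ n ∈ S, ‖a n‖ ∧ ∑ n ∈ S, ‖a n‖ ≤ 2 :=
    fun k N => exists_block d a ha u hLevy _ (by positivity) N
  choose F hF1 hF2 hF3 using Hb
  set Nf : ℕ → ℕ := fun k => Nat.rec 0 (fun k Nk => max (Nk + 1) ((F k Nk).sup id + 1)) k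
    with hNf
  set S : ℕ → Finset ℕ := fun k => F k (Nf k) with hS
  have hNfsucc : ∀ k, Nf (k+1) = max (Nf k + 1) ((S k).sup id + 1) := fun k => rfl
  have hNmono : StrictMono Nf := strictMono_nat_of_lt_succ (fun k => by
    rw [hNfsucc]; omega)
  have hmemlow : ∀ k n, n ∈ S k → Nf k ≤ n := fun k n h => (hF1 k (Nf k) n h).1
  have hball : ∀ k n, n ∈ S k → ‖a n‖⁻¹ • a n ∈ Metric.ball u ((1/2:ℝ) ^ (k+1)) :=
    fun k n h => (hF1 k (Nf k) n h).2
  have hmemhigh : ∀ k n, n ∈ S k → n < Nf (k+1) := by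
    intro k n h
    have h1 : id n ≤ (S k).sup id := Finset.le_sup h
    rw [hNfsucc]; simp only [id] at h1; omega
  have hkle : ∀ k n, n ∈ S k → k ≤ n :=
    fun k n h => le_trans hNmono.le_apply (hmemlow k n h)
  have hdisj : ∀ k l, k < l → Disjoint (S k) (S l) := by
    intro k l hkl
    rw [Finset.disjoint_left]
    intro n h1 h2
    have e1 := hmemhigh k n h1
    have e2 := hmemlow l n h2
    have e3 : Nf (k+1) ≤ Nf l := hNmono.monotone (Nat.succ_le_of_lt hkl)
    omega
  set α : ℕ → ℝ := fun n => ⟪a n, u⟫ with hα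
  set ω : ℕ → EuclideanSpace ℝ (Fin d) := fun n => a n - α n • u with hω
  set I : Set ℕ := ⋃ k, (S k : Set ℕ) with hI
  have hptwise : ∀ k n, n ∈ S k →
      ‖a n‖ / 2 ≤ α n ∧ ‖ω n‖ ≤ (1/2:ℝ) ^ (k+1) * ‖a n‖ := by
    intro k n hn
    have hna : ‖a n‖ ≠ 0 := norm_ne_zero_iff.2 (hne n)
    set v := ‖a n‖⁻¹ • a n with hvdef
    have hv : ‖v‖ = 1 := by
      rw [hvdef, norm_smul, norm_inv, norm_norm, inv_mul_cancel₀ hna]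
    have hdist : ‖v - u‖ < (1/2:ℝ) ^ (k+1) := by
      have := hball k n hn
      rw [Metric.mem_ball, dist_eq_norm] at this
      exact this
    have hhalf : ‖v - u‖ ≤ 1/2 := by
      refine le_trans hdist.le ?_
      calc ((1:ℝ)/2) ^ (k+1) ≤ (1/2) ^ 1 :=
            pow_le_pow_of_le_one (by norm_num) (by norm_num) (by omega)
        _ = 1/2 := pow_one _
    obtain ⟨hc, hproj⟩ := geo_lemma d v u hv hu hhalf
    have hav : a n = ‖a n‖ • v := by
      rw [hvdef, smul_smul, mul_inv_cancel₀ hna, one_smul]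
    have hαeq : α n = ‖a n‖ * ⟪v, u⟫ := by
      rw [hα]
      simp only
      conv_lhs => rw [hav]
      exact real_inner_smul_left v u ‖a n‖
    constructor
    · rw [hαeq]
      calc ‖a n‖ / 2 = ‖a n‖ * (1/2) := by ring
        _ ≤ ‖a n‖ * ⟪v, u⟫ := mul_le_mul_of_nonneg_left hc (norm_nonneg _)
    · have hωeq : ω n = ‖a n‖ • (v - ⟪v, u⟫ • u) := by
        rw [hω]
        simp only
        rw [smul_sub, ← hav, smul_smul, ← hαeq]
      rw [hωeq, norm_smul, norm_norm]
      calc ‖a n‖ * ‖v - ⟪v, u⟫ • u‖ ≤ ‖a n‖ * ‖v - u‖ :=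
            mul_le_mul_of_nonneg_left hproj (norm_nonneg _)
        _ ≤ ‖a n‖ * ((1/2:ℝ) ^ (k+1)) :=
            mul_le_mul_of_nonneg_left hdist.le (norm_nonneg _)
        _ = (1/2:ℝ) ^ (k+1) * ‖a n‖ := mul_comm _ _
  have hblockα : ∀ k, 1/2 ≤ ∑ n ∈ S k, α n := by
    intro k
    calc (1/2:ℝ) = 1 / 2 := rfl
      _ ≤ (∑ n ∈ S k, ‖a n‖) / 2 := by
          have := hF2 k (Nf k); linarith
      _ = ∑ n ∈ S k, ‖a n‖ / 2 := by rw [Finset.sum_div]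
      _ ≤ ∑ n ∈ S k, α n :=
          Finset.sum_le_sum (fun n hn => (hptwise k n hn).1)
  have hblockω : ∀ k, ∑ n ∈ S k, ‖ω n‖ ≤ (1/2:ℝ) ^ k := by
    intro k
    calc ∑ n ∈ S k, ‖ω n‖ ≤ ∑ n ∈ S k, (1/2:ℝ) ^ (k+1) * ‖a n‖ :=
          Finset.sum_le_sum (fun n hn => (hptwise k n hn).2)
      _ = (1/2:ℝ) ^ (k+1) * ∑ n ∈ S k, ‖a n‖ := by rw [Finset.mul_sum]
      _ ≤ (1/2:ℝ) ^ (k+1) * 2 := by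
          have := hF3 k (Nf k)
          have hp : (0:ℝ) ≤ (1/2:ℝ) ^ (k+1) := by positivity
          exact mul_le_mul_of_nonneg_left this hp
      _ = (1/2:ℝ) ^ k := by rw [pow_succ]; ring
  have hmemI : ∀ n ∈ I, ∃ k, n ∈ S k := by
    intro n hn
    rw [hI, Set.mem_iUnion] at hn
    obtain ⟨k, hk⟩ := hn
    exact ⟨k, hk⟩
  have hSsubI : ∀ k, ∀ n ∈ S k, n ∈ I := by
    intro k n hn
    rw [hI, Set.mem_iUnion]
    exact ⟨k, hn⟩
  refine ⟨I, α, ω, ?_, ?_, ?_, ?_⟩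
  · intro n hn
    obtain ⟨k, hk⟩ := hmemI n hn
    have h1 := (hptwise k n hk).1
    have h2 : 0 < ‖a n‖ := norm_pos_iff.2 (hne n)
    linarith
  · intro n _
    rw [hω]
    simp
  · intro h
    have h2 : Summable (I.indicator α) := summable_subtype_iff_indicator.1 h
    obtain ⟨s, hs⟩ := summable_iff_vanishing.1 h2 (Set.Iio (1/2:ℝ))
      (Iio_mem_nhds (by norm_num))
    set k := s.sup id + 1 with hk
    have hdisjk : Disjoint (S k) s := by
      rw [Finset.disjoint_left]
      intro n h1 h2
      have := hkle k n h1
      have : id n ≤ s.sup id := Finset.le_sup h2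
      simp only [id] at this
      omega
    have := hs (S k) hdisjk
    rw [Set.mem_Iio] at this
    have heq : ∑ n ∈ S k, I.indicator α n = ∑ n ∈ S k, α n :=
      Finset.sum_congr rfl (fun n hn => Set.indicator_of_mem (hSsubI k n hn) α)
    rw [heq] at this
    have := hblockα k
    linarith
  · have : (fun n : I => ‖ω n‖) = ((fun n => ‖ω n‖) ∘ Subtype.val) := rfl
    rw [this, summable_subtype_iff_indicator]
    apply summable_of_sum_range_le (c := 2)
    · intro n
      exact Set.indicator_nonneg (fun j _ => norm_nonneg _) n
    · intro n
      have step1 : ∑ i ∈ range n, I.indicator (fun j => ‖ω j‖) i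
          = ∑ i ∈ (range n).filter (· ∈ I), ‖ω i‖ := by
        rw [Finset.sum_filter]
        exact Finset.sum_congr rfl (fun i _ => Set.indicator_apply I _ i)
      have hsubset : (range n).filter (· ∈ I) ⊆ (range n).biUnion S := by
        intro i hi
        rw [Finset.mem_filter] at hi
        obtain ⟨k, hk⟩ := hmemI i hi.2
        rw [Finset.mem_biUnion]
        refine ⟨k, ?_, hk⟩
        rw [Finset.mem_range]
        have := hkle k i hk
        have := Finset.mem_range.1 hi.1
        omega
      have hpd : (↑(range n) : Set ℕ).PairwiseDisjoint S := by
        intro k _ l _ hkl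
        rcases lt_or_gt_of_ne hkl with h | h
        · exact hdisj k l h
        · exact (hdisj l k h).symm
      calc ∑ i ∈ range n, I.indicator (fun j => ‖ω j‖) i
          = ∑ i ∈ (range n).filter (· ∈ I), ‖ω i‖ := step1
        _ ≤ ∑ i ∈ (range n).biUnion S, ‖ω i‖ :=
            Finset.sum_le_sum_of_subset_of_nonneg hsubset
              (fun i _ _ => norm_nonneg _)
        _ = ∑ k ∈ range n, ∑ i ∈ S k, ‖ω i‖ := Finset.sum_biUnion hpd
        _ ≤ ∑ k ∈ range n, (1/2:ℝ) ^ k :=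
            Finset.sum_le_sum (fun k _ => hblockω k)
        _ ≤ 2 := sum_geometric_two_le n
end

section
/- Let (a_n) be a null sequence in R^d that admits d linearly independent Lévy vectors. Then the achievement set S(a_n) = {x ∈ R^d : ∃ ε ∈ {-1,1}^N with ∑_{n=1}^∞ ε_n a_n = x} equals all of R^d. -/
/-!
Write the residual `w` of the current partial sum in the basis of Lévy vectors,
`w = ∑ cᵢ uᵢ`. The terms pointing near `uᵢ` have divergent total length, so a finite stretch of
late terms contains such terms of total length `≈ |cᵢ|`; giving them the sign of `cᵢ` moves the
partial sum by `≈ cᵢ uᵢ`. The other terms of the stretch are signed by the Bárány–Grinberg lemma,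
which keeps all their prefix sums of size `O(d · sup ‖aₙ‖)`. Treating the `d` directions one after
the other, a block of signs reduces the residual to `O(sup_{n ≥ N} ‖aₙ‖)` while every
intermediate partial sum stays within `O(‖w‖ + sup_{n ≥ N} ‖aₙ‖)` of the target. Since
`aₙ → 0`, chaining such blocks makes the partial sums converge to the target.
-/

open Filter Finset Classical

section SignBalancing

variable {ι E : Type*} [NormedAddCommGroup E] [NormedSpace ℝ E]

theorem norm_sum_smul_le_of_sum_smul_eq_zero {J : Finset ι} {x ε : ι → ℝ} {v : ι → E} {s : ℝ}
    (hxv : ∑ n ∈ J, x n • v n = 0) (hx : ∀ n ∈ J, |x n| ≤ 1) (hε : ∀ n ∈ J, |ε n| ≤ 1)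
    (hεx : ∀ n ∈ J, |x n| = 1 → ε n = x n) (hv : ∀ n ∈ J, ‖v n‖ ≤ s) :
    ‖∑ n ∈ J, ε n • v n‖ ≤ 2 * #{n ∈ J | |x n| ≠ 1} * s := by
  have hsplit : ∑ n ∈ J, ε n • v n = ∑ n ∈ J with |x n| ≠ 1, (ε n - x n) • v n := by
    rw [Finset.sum_filter_of_ne (p := fun n => |x n| ≠ 1) (f := fun n => (ε n - x n) • v n)
      fun n hn h hx1 => h (by rw [hεx n hn hx1, sub_self, zero_smul])]
    simp only [sub_smul, Finset.sum_sub_distrib, hxv, sub_zero]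
  calc ‖∑ n ∈ J, ε n • v n‖
      ≤ ∑ n ∈ J with |x n| ≠ 1, ‖(ε n - x n) • v n‖ := hsplit ▸ norm_sum_le _ _
    _ ≤ ∑ n ∈ J with |x n| ≠ 1, 2 * s := Finset.sum_le_sum fun n hn => by
        obtain ⟨hnJ, -⟩ := Finset.mem_filter.mp hn
        rw [norm_smul, Real.norm_eq_abs]
        exact mul_le_mul ((abs_sub _ _).trans (by linarith [hε n hnJ, hx n hnJ])) (hv n hnJ)
          (norm_nonneg _) zero_le_two
    _ = 2 * #{n ∈ J | |x n| ≠ 1} * s := by rw [Finset.sum_const, nsmul_eq_mul]; ring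

variable [FiniteDimensional ℝ E]

open Module

theorem exists_linear_relation_of_finrank_lt_card (v : ι → E) {F : Finset ι}
    (hF : finrank ℝ E < #F) :
    ∃ z : ι → ℝ, (∀ n ∉ F, z n = 0) ∧ ∑ n ∈ F, z n • v n = 0 ∧ ∃ j ∈ F, z j ≠ 0 := by
  obtain ⟨g, hg, j, hj⟩ := Fintype.not_linearIndependent_iff.mp
    (mt (LinearIndependent.fintype_card_le_finrank (b := fun n : F => v n))
      (by simpa using hF.not_ge))
  refine ⟨Subtype.val.extend g 0, fun n hn => ?_, ?_, j, j.2, ?_⟩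
  · exact Function.extend_apply' _ _ _ fun ⟨m, hm⟩ => hn (hm ▸ m.2)
  · rw [← Finset.sum_coe_sort F]
    simpa only [Subtype.val_injective.extend_apply] using hg
  · rwa [Subtype.val_injective.extend_apply]

theorem exists_abs_eq_one_of_finrank_lt_card (v : ι → E) {F : Finset ι}
    (hF : finrank ℝ E < #F) {x : ι → ℝ} (hx : ∀ n ∈ F, |x n| ≤ 1) :
    ∃ y : ι → ℝ, (∀ n ∉ F, y n = x n) ∧ (∀ n ∈ F, |y n| ≤ 1) ∧ (∃ j ∈ F, |y j| = 1) ∧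
      ∑ n ∈ F, y n • v n = ∑ n ∈ F, x n • v n := by
  obtain ⟨z, hz, hzv, j, hjF, hj⟩ := exists_linear_relation_of_finrank_lt_card v hF
  have hne : F.Nonempty := ⟨j, hjF⟩
  -- move along the relation `z` until a first coordinate reaches `±1`
  set φ : ℝ → ℝ := fun t => F.sup' hne fun n => |x n + t * z n|
  have hφ : Continuous φ :=
    Continuous.finset_sup'_apply hne fun n _ => by fun_prop
  have hφ0 : φ 0 ≤ 1 := Finset.sup'_le _ _ fun n hn => by simpa using hx n hn
  have hφT : 1 ≤ φ (2 / |z j|) := by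
    refine le_trans ?_ (Finset.le_sup' (fun n => |x n + 2 / |z j| * z n|) hjF)
    have h2 : |2 / |z j| * z j| = 2 := by
      rw [abs_mul, abs_div, abs_abs, abs_two, div_mul_cancel₀ _ (abs_ne_zero.mpr hj)]
    have := abs_sub_abs_le_abs_sub (2 / |z j| * z j) (-x j)
    rw [abs_neg, sub_neg_eq_add, add_comm] at this
    linarith [hx j hjF]
  obtain ⟨t, -, ht⟩ := intermediate_value_Icc (by positivity) hφ.continuousOn ⟨hφ0, hφT⟩
  refine ⟨fun n => x n + t * z n, fun n hn => by simp [hz n hn], fun n hn => ?_, ?_, ?_⟩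
  · exact ht ▸ Finset.le_sup' (fun n => |x n + t * z n|) hn
  · obtain ⟨i, hi, hφi⟩ := Finset.exists_mem_eq_sup' hne fun n => |x n + t * z n|
    exact ⟨i, hi, hφi ▸ ht⟩
  · simp only [add_smul, Finset.sum_add_distrib, mul_smul, ← Finset.smul_sum, hzv, smul_zero,
      add_zero]

theorem exists_card_abs_ne_one_le_finrank (v : ι → E) (B : Finset ι) {x : ι → ℝ}
    (hx : ∀ n ∈ B, |x n| ≤ 1) :
    ∃ y : ι → ℝ, (∀ n ∈ B, |y n| ≤ 1) ∧ (∀ n ∈ B, |x n| = 1 → y n = x n) ∧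
      ∑ n ∈ B, y n • v n = ∑ n ∈ B, x n • v n ∧ #{n ∈ B | |y n| ≠ 1} ≤ finrank ℝ E := by
  induction hk : #{n ∈ B | |x n| ≠ 1} using Nat.strong_induction_on generalizing x with
  | _ k ih =>
  by_cases hkd : k ≤ finrank ℝ E
  · exact ⟨x, hx, fun _ _ _ => rfl, rfl, hk ▸ hkd⟩
  set F := {n ∈ B | |x n| ≠ 1}
  obtain ⟨y, hyx, hyF, ⟨j, hjF, hj⟩, hyv⟩ :=
    exists_abs_eq_one_of_finrank_lt_card v (hk ▸ not_le.mp hkd)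
      (fun n hn => hx n (Finset.mem_filter.mp hn).1)
  have hfixed : ∀ n ∈ B, |x n| = 1 → y n = x n := fun n hnB hn =>
    hyx n fun hnF => (Finset.mem_filter.mp hnF).2 hn
  have hyB : ∀ n ∈ B, |y n| ≤ 1 := fun n hn => by
    by_cases hnF : n ∈ F
    · exact hyF n hnF
    · rw [hyx n hnF]; exact hx n hn
  have hlt : #{n ∈ B | |y n| ≠ 1} < k := by
    rw [← hk]
    refine Finset.card_lt_card ((Finset.ssubset_iff_of_subset fun n hn => ?_).mpr
      ⟨j, hjF, fun hj' => (Finset.mem_filter.mp hj').2 hj⟩)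
    obtain ⟨hnB, hn⟩ := Finset.mem_filter.mp hn
    exact Finset.mem_filter.mpr ⟨hnB, fun hx1 => hn (hfixed n hnB hx1 ▸ hx1)⟩
  obtain ⟨w, hwB, hwy, hwv, hwcard⟩ := ih _ hlt hyB rfl
  refine ⟨w, hwB, fun n hnB hn => (hwy n hnB (hfixed n hnB hn ▸ hn)).trans (hfixed n hnB hn),
    ?_, hwcard⟩
  rw [hwv, ← Finset.sum_filter_add_sum_filter_not B (fun n => |x n| ≠ 1),
    ← Finset.sum_filter_add_sum_filter_not B (fun n => |x n| ≠ 1) (fun n => x n • v n), hyv]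
  congr 1
  exact Finset.sum_congr rfl fun n hn => by rw [hyx n fun h => (Finset.mem_filter.mp hn).2
    (Finset.mem_filter.mp h).2]

variable [LinearOrder ι]

/-- The invariant of the Bárány–Grinberg argument: a coordinate that has reached `±1` is never
changed when later vectors are added, so the prefix sums of any signing that agrees with the final
`x` there are controlled by the at most `finrank ℝ E` fractional coordinates of the stage at which
the prefix ends. -/
theorem exists_fractional_signs_norm_sum_filter_lt_le (v : ι → E)
    {s : ℝ} (hs : 0 ≤ s) (J : Finset ι) (hv : ∀ n ∈ J, ‖v n‖ ≤ s) :
    ∃ x : ι → ℝ, (∀ n ∈ J, |x n| ≤ 1) ∧ #{n ∈ J | |x n| ≠ 1} ≤ finrank ℝ E ∧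
      ∑ n ∈ J, x n • v n = 0 ∧
      ∀ ε : ι → ℝ, (∀ n ∈ J, |ε n| ≤ 1) → (∀ n ∈ J, |x n| = 1 → ε n = x n) →
        ∀ P, ‖∑ n ∈ J with n < P, ε n • v n‖ ≤ 2 * finrank ℝ E * s := by
  induction J using Finset.induction_on_max with
  | empty => exact ⟨0, by simp, by simp, by simp, fun ε _ _ P => by simp; positivity⟩
  | insert m J hm ih =>
  obtain ⟨x, hx, -, hxv, hxε⟩ := ih fun n hn => hv n (mem_insert_of_mem hn)
  have hmJ : m ∉ J := fun h => lt_irrefl m (hm m h)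
  have hupd : ∀ n ∈ J, Function.update x m 0 n = x n := fun n hn =>
    Function.update_of_ne (hm n hn).ne _ _
  obtain ⟨y, hy, hyx, hyv, hycard⟩ :=
    exists_card_abs_ne_one_le_finrank v (insert m J) (x := Function.update x m 0) fun n hn => by
      rcases Finset.mem_insert.mp hn with rfl | hn
      · simp
      · rw [hupd n hn]; exact hx n hn
  have hy0 : ∑ n ∈ insert m J, y n • v n = 0 := by
    rw [hyv, sum_insert hmJ, Function.update_self, zero_smul, zero_add,
      Finset.sum_congr rfl fun n hn => by rw [hupd n hn], hxv]
  refine ⟨y, hy, hycard, hy0, fun ε hε hεy P => ?_⟩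
  by_cases hP : m < P
  · rw [Finset.filter_true_of_mem fun n hn => (Finset.mem_insert.mp hn).elim
      (fun h => h ▸ hP) fun h => (hm n h).trans hP]
    refine (norm_sum_smul_le_of_sum_smul_eq_zero hy0 hy hε hεy hv).trans ?_
    gcongr
  · rw [Finset.filter_insert, if_neg hP]
    refine hxε ε (fun n hn => hε n (mem_insert_of_mem hn)) (fun n hn hxn => ?_) P
    have hyn : y n = x n :=
      (hyx n (mem_insert_of_mem hn) (by rwa [hupd n hn])).trans (hupd n hn)
    rw [hεy n (mem_insert_of_mem hn) (hyn ▸ hxn), hyn]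

theorem exists_signs_norm_sum_filter_lt_le (v : ι → E)
    {s : ℝ} (hs : 0 ≤ s) (J : Finset ι) (hv : ∀ n ∈ J, ‖v n‖ ≤ s) :
    ∃ ε : ι → ℝ, (∀ n, ε n = 1 ∨ ε n = -1) ∧
      ∀ P, ‖∑ n ∈ J with n < P, ε n • v n‖ ≤ 2 * finrank ℝ E * s := by
  obtain ⟨x, -, -, -, hxε⟩ := exists_fractional_signs_norm_sum_filter_lt_le v hs J hv
  refine ⟨fun n => if x n < 0 then -1 else 1, fun n => by by_cases h : x n < 0 <;> simp [h],
    hxε _ (fun n _ => by by_cases h : x n < 0 <;> simp [h]) fun n _ hn => ?_⟩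
  rcases (abs_eq zero_le_one).mp hn with h | h <;> simp [h]

end SignBalancing

theorem exists_sum_Ico_mem_Icc {g : ℕ → ℝ} (hg : ∀ n, 0 ≤ g n) (hsum : ¬Summable g) {N : ℕ}
    {s : ℝ} (hgs : ∀ n, N ≤ n → g n ≤ s) {T : ℝ} (hT : 0 ≤ T) :
    ∃ M, N ≤ M ∧ T ≤ ∑ n ∈ Ico N M, g n ∧ ∑ n ∈ Ico N M, g n ≤ T + s := by
  have hex : ∃ k, T ≤ ∑ n ∈ Ico N (N + k), g n := by
    have htop := (tendsto_add_atTop_iff_nat N).mpr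
      ((not_summable_iff_tendsto_nat_atTop_of_nonneg hg).mp hsum)
    obtain ⟨k, hk⟩ := (htop.eventually_ge_atTop (T + ∑ n ∈ range N, g n)).exists
    refine ⟨k, ?_⟩
    rw [Finset.sum_Ico_eq_sub _ (Nat.le_add_right N k), add_comm N k]
    linarith
  refine ⟨N + Nat.find hex, Nat.le_add_right _ _, Nat.find_spec hex, ?_⟩
  rcases h : Nat.find hex with _ | k
  · simp only [add_zero, Finset.Ico_self, Finset.sum_empty]
    linarith [hg N, hgs N le_rfl]
  · have hk := Nat.find_min hex (h ▸ Nat.lt_succ_self k : k < Nat.find hex)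
    rw [← add_assoc, Finset.sum_Ico_succ_top (Nat.le_add_right N k)]
    linarith [hgs (N + k) (Nat.le_add_right N k)]

theorem exists_tendsto_zero_forall_norm_le {E : Type*} [SeminormedAddCommGroup E] {a : ℕ → E}
    (ha : Tendsto a atTop (nhds 0)) :
    ∃ s : ℕ → ℝ, (∀ N, 0 < s N) ∧ Tendsto s atTop (nhds 0) ∧ ∀ N n, N ≤ n → ‖a n‖ ≤ s N := by
  have ha' := tendsto_zero_iff_norm_tendsto_zero.mp ha
  have hbdd : ∀ N, BddAbove (Set.range fun n => ‖a (n + N)‖) := fun N =>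
    (ha'.comp (tendsto_add_atTop_nat N)).bddAbove_range
  set t : ℕ → ℝ := fun N => ⨆ n, ‖a (n + N)‖
  have ht0 : ∀ N, 0 ≤ t N := fun N => (norm_nonneg _).trans (le_ciSup (hbdd N) 0)
  have ht : Tendsto t atTop (nhds 0) := by
    refine tendsto_order.2 ⟨fun b hb => Eventually.of_forall fun N => hb.trans_le (ht0 N),
      fun b hb => ?_⟩
    obtain ⟨N₀, hN₀⟩ := eventually_atTop.mp (ha'.eventually (ge_mem_nhds (half_pos hb)))
    filter_upwards [eventually_ge_atTop N₀] with N hN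
    exact (ciSup_le fun n => hN₀ _ (by omega)).trans_lt (half_lt_self hb)
  refine ⟨fun N => t N + 1 / (N + 1), fun N => by positivity [ht0 N], ?_, fun N n hn => ?_⟩
  · simpa using ht.add tendsto_one_div_add_atTop_nhds_zero_nat
  · have : ‖a n‖ ≤ t N := by simpa [Nat.sub_add_cancel hn] using le_ciSup (hbdd N) (n - N)
    have : (0 : ℝ) < 1 / (N + 1) := by positivity
    linarith

theorem exists_forall_lt_eq_of_strictMono {α : Type*} {f : ℕ → ℕ → α} {N : ℕ → ℕ}
    (hN : StrictMono N) (hf : ∀ k n, n < N k → f (k + 1) n = f k n) :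
    ∃ g : ℕ → α, ∀ k n, n < N k → g n = f k n := by
  have hstable : ∀ k k', k ≤ k' → ∀ n, n < N k → f k' n = f k n := by
    intro k k' hkk' n hn
    induction k', hkk' using Nat.le_induction with
    | base => rfl
    | succ k' hk ih => rw [hf k' n (hn.trans_le (hN.monotone hk)), ih]
  refine ⟨fun n => f (n + 1) n, fun k n hn => ?_⟩
  rcases le_total k (n + 1) with h | h
  · exact hstable k (n + 1) h n hn
  · exact (hstable (n + 1) k h n ((Nat.lt_succ_self n).trans_le (hN.id_le _))).symm

theorem tendsto_of_dist_le_of_strictMono {X : Type*} [PseudoMetricSpace X] {g : ℕ → X} {x : X}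
    {N : ℕ → ℕ} (hN : StrictMono N) {B : ℕ → ℝ} (hB : Tendsto B atTop (nhds 0))
    (hgB : ∀ k Q, N k ≤ Q → Q < N (k + 1) → dist (g Q) x ≤ B k) :
    Tendsto g atTop (nhds x) := by
  rw [Metric.tendsto_atTop]
  intro ρ hρ
  obtain ⟨k₀, hk₀⟩ := (hB.eventually (gt_mem_nhds hρ)).exists_forall_of_atTop
  refine ⟨N k₀, fun Q hQ => ?_⟩
  have hex : ∃ j, Q < N j := ⟨Q + 1, (Nat.lt_succ_self Q).trans_le (hN.id_le _)⟩
  obtain ⟨k, hk⟩ : ∃ k, Nat.find hex = k + 1 := Nat.exists_eq_succ_of_ne_zero fun h0 =>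
    (Nat.find_spec hex).not_ge (h0 ▸ (hN.monotone (Nat.zero_le k₀)).trans hQ)
  have hQk : Q < N (k + 1) := hk ▸ Nat.find_spec hex
  have hkQ : N k ≤ Q := not_lt.mp (Nat.find_min hex (hk ▸ Nat.lt_succ_self k))
  exact (hgB k Q hkQ hQk).trans_lt (hk₀ k (Nat.lt_succ_iff.mp (hN.lt_iff_lt.mp (hQ.trans_lt hQk))))

theorem Module.Basis.exists_sum_norm_equivFun_smul_le {ι E : Type*} [Fintype ι]
    [NormedAddCommGroup E] [NormedSpace ℝ E] (b : Module.Basis ι ℝ E) :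
    ∃ C, ∀ w, ∑ i, ‖b.equivFun w i • b i‖ ≤ C * ‖w‖ := by
  refine ⟨∑ i, ‖b i‖ * ‖(b.equivFunL : E →L[ℝ] ι → ℝ)‖, fun w => ?_⟩
  rw [Finset.sum_mul]
  refine Finset.sum_le_sum fun i _ => ?_
  rw [_root_.norm_smul, mul_comm, mul_assoc]
  gcongr
  exact (norm_le_pi_norm (b.equivFunL w) i).trans
    ((b.equivFunL : E →L[ℝ] ι → ℝ).le_opNorm w)

section SignedBlocks

variable {E : Type*} [NormedAddCommGroup E] [NormedSpace ℝ E]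

def IsLevyVector (a : ℕ → E) (u : E) : Prop :=
  ∀ δ : ℝ, 0 < δ → ¬Summable fun n => if ‖a n‖⁻¹ • a n ∈ Metric.ball u δ then ‖a n‖ else 0

structure IsSignedBlock (a : ℕ → E) (ε : ℕ → ℝ) (N M : ℕ) (v : E) (e R : ℝ) : Prop where
  sign : ∀ n, ε n = 1 ∨ ε n = -1
  norm_sum_sub_le : ‖∑ n ∈ Ico N M, ε n • a n - v‖ ≤ e
  norm_sum_le : ∀ Q, N ≤ Q → Q ≤ M → ‖∑ n ∈ Ico N Q, ε n • a n‖ ≤ R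

variable {a : ℕ → E}

theorem IsSignedBlock.congr {ε ε' : ℕ → ℝ} {N M : ℕ} {v : E} {e R : ℝ}
    (h : IsSignedBlock a ε N M v e R) (hε' : ∀ n, ε' n = 1 ∨ ε' n = -1)
    (heq : ∀ n, N ≤ n → ε' n = ε n) : IsSignedBlock a ε' N M v e R := by
  have hsum : ∀ Q, ∑ n ∈ Ico N Q, ε' n • a n = ∑ n ∈ Ico N Q, ε n • a n := fun Q =>
    Finset.sum_congr rfl fun n hn => by rw [heq n (Finset.mem_Ico.mp hn).1]
  exact ⟨hε', hsum M ▸ h.norm_sum_sub_le, fun Q hNQ hQM => hsum Q ▸ h.norm_sum_le Q hNQ hQM⟩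

theorem IsSignedBlock.mono {ε : ℕ → ℝ} {N M : ℕ} {v : E} {e e' R R' : ℝ}
    (h : IsSignedBlock a ε N M v e R) (he : e ≤ e') (hR : R ≤ R') :
    IsSignedBlock a ε N M v e' R' :=
  ⟨h.sign, h.norm_sum_sub_le.trans he, fun Q hNQ hQM => (h.norm_sum_le Q hNQ hQM).trans hR⟩

theorem IsSignedBlock.append {ε ε' : ℕ → ℝ} {N M M' : ℕ} {v v' : E} {e e' R R' : ℝ}
    (h : IsSignedBlock a ε N M v e R) (h' : IsSignedBlock a ε' M M' v' e' R')
    (hNM : N ≤ M) (hMM' : M ≤ M') :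
    IsSignedBlock a (fun n => if n < M then ε n else ε' n) N M' (v + v') (e + e')
      (max R (‖v‖ + e + R')) := by
  set ε'' := fun n => if n < M then ε n else ε' n
  have hbelow : ∀ Q, Q ≤ M → ∑ n ∈ Ico N Q, ε'' n • a n = ∑ n ∈ Ico N Q, ε n • a n :=
    fun Q hQ => Finset.sum_congr rfl fun n hn => by
      simp [ε'', (Finset.mem_Ico.mp hn).2.trans_le hQ]
  have habove : ∀ Q, M ≤ Q → ∑ n ∈ Ico N Q, ε'' n • a n =
      ∑ n ∈ Ico N M, ε n • a n + ∑ n ∈ Ico M Q, ε' n • a n := fun Q hQ => by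
    rw [← Finset.sum_Ico_consecutive _ hNM hQ, hbelow M le_rfl]
    exact congrArg _ (Finset.sum_congr rfl fun n hn => by
      simp [ε'', not_lt.mpr (Finset.mem_Ico.mp hn).1])
  refine ⟨fun n => ?_, ?_, fun Q hNQ hQM' => ?_⟩
  · by_cases hn : n < M
    · simpa [ε'', hn] using h.sign n
    · simpa [ε'', hn] using h'.sign n
  · rw [habove M' hMM', add_sub_add_comm]
    exact (norm_add_le _ _).trans (add_le_add h.norm_sum_sub_le h'.norm_sum_sub_le)
  · rcases le_total Q M with hQM | hMQ
    · rw [hbelow Q hQM]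
      exact le_max_of_le_left (h.norm_sum_le Q hNQ hQM)
    · rw [habove Q hMQ]
      refine le_max_of_le_right ((norm_add_le _ _).trans
        (add_le_add ?_ (h'.norm_sum_le Q hMQ hQM')))
      exact (norm_le_norm_add_norm_sub' _ v).trans (by linarith [h.norm_sum_sub_le])

theorem exists_isSignedBlock_sum {ι : Type*} (S : Finset ι) (v : ι → E) {e : ℝ} {N : ℕ}
    (hN : ‖a N‖ ≤ e)
    (hblock : ∀ i ∈ S, ∀ N', N ≤ N' →
      ∃ M ε, N' ≤ M ∧ IsSignedBlock a ε N' M (v i) e (‖v i‖ + e)) :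
    ∃ M ε, N < M ∧ IsSignedBlock a ε N M (∑ i ∈ S, v i) ((#S + 1) * e)
      (∑ i ∈ S, ‖v i‖ + (#S + 1) * e) := by
  have he : 0 ≤ e := (norm_nonneg _).trans hN
  induction S using Finset.induction_on with
  | empty =>
    refine ⟨N + 1, fun _ => 1, Nat.lt_succ_self N, fun _ => Or.inl rfl, by simpa using hN,
      fun Q hNQ hQ => ?_⟩
    rcases (show Q = N ∨ Q = N + 1 by omega) with rfl | rfl
    · simpa using he
    · simpa using hN
  | insert i S hi ih =>
    obtain ⟨M, ε, hNM, hε⟩ := ih fun j hj => hblock j (mem_insert_of_mem hj)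
    obtain ⟨M', ε', hMM', hε'⟩ := hblock i (mem_insert_self i S) M hNM.le
    rw [sum_insert hi, sum_insert hi, card_insert_of_notMem hi, add_comm (v i)]
    have hnorm := norm_sum_le S v
    exact ⟨M', _, hNM.trans_le hMM', (hε.append hε' hNM.le hMM').mono (by push_cast; linarith)
      (max_le (by push_cast; linarith [norm_nonneg (v i)]) (by push_cast; linarith))⟩

theorem exists_seq_isSignedBlock (x : E) (s : ℕ → ℝ) (C : ℝ)
    (hblock : ∀ N w, ∃ M ε, N < M ∧ IsSignedBlock a ε N M w (s N) (C * ‖w‖ + s N)) :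
    ∃ (N : ℕ → ℕ) (f : ℕ → ℕ → ℝ), StrictMono N ∧ (∀ k n, n < N k → f (k + 1) n = f k n) ∧
      ∀ k, IsSignedBlock a (f (k + 1)) (N k) (N (k + 1))
        (x - ∑ n ∈ range (N k), f k n • a n) (s (N k))
        (C * ‖x - ∑ n ∈ range (N k), f k n • a n‖ + s (N k)) := by
  choose M σ hM hσ using hblock
  -- a state `(N, f)` records the signs `f` chosen on `[0, N)`; the next block targets `r (N, f)`
  set r : ℕ × (ℕ → ℝ) → E := fun p => x - ∑ n ∈ range p.1, p.2 n • a n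
  set step : ℕ × (ℕ → ℝ) → ℕ × (ℕ → ℝ) := fun p =>
    (M p.1 (r p), fun n => if n < p.1 then p.2 n else σ p.1 (r p) n)
  set F : ℕ → ℕ × (ℕ → ℝ) := fun k => step^[k] (0, fun _ => 1)
  have hF : ∀ k, F (k + 1) = step (F k) := fun k => Function.iterate_succ_apply' step k _
  have hsign : ∀ k n, (F k).2 n = 1 ∨ (F k).2 n = -1 := by
    intro k
    induction k with
    | zero => simp [F]
    | succ k ih =>
      intro n
      rw [hF]
      by_cases hn : n < (F k).1
      · simpa [step, hn] using ih n
      · simpa [step, hn] using (hσ _ _).sign n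
  refine ⟨fun k => (F k).1, fun k => (F k).2, strictMono_nat_of_lt_succ fun k => ?_,
    fun k n hn => ?_, fun k => ?_⟩
  · rw [hF]; exact hM _ _
  · beta_reduce
    rw [hF]
    simp [step, hn]
  · beta_reduce
    rw [hF]
    exact (hσ (F k).1 (r (F k))).congr (hF k ▸ hsign (k + 1)) fun n hn => by
      simp [step, not_lt.mpr hn]

theorem exists_signs_tendsto_of_forall_isSignedBlock (x : E) {s : ℕ → ℝ}
    (hs : Tendsto s atTop (nhds 0)) {C : ℝ}
    (hblock : ∀ N w, ∃ M ε, N < M ∧ IsSignedBlock a ε N M w (s N) (C * ‖w‖ + s N)) :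
    ∃ ε : ℕ → ℝ, (∀ n, ε n = 1 ∨ ε n = -1) ∧
      Tendsto (fun Q => ∑ n ∈ range Q, ε n • a n) atTop (nhds x) := by
  obtain ⟨N, f, hN, hf, hblk⟩ := exists_seq_isSignedBlock x s C hblock
  obtain ⟨ε, hε⟩ := exists_forall_lt_eq_of_strictMono hN hf
  set r : ℕ → E := fun k => x - ∑ n ∈ range (N k), f k n • a n
  have hres : ∀ k Q, N k ≤ Q →
      x - ∑ n ∈ range Q, f (k + 1) n • a n = r k - ∑ n ∈ Ico (N k) Q, f (k + 1) n • a n := by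
    intro k Q hQ
    rw [← Finset.sum_range_add_sum_Ico _ hQ, sub_add_eq_sub_sub]
    exact congrArg (· - _) (congrArg (x - ·) (Finset.sum_congr rfl fun n hn => by
      rw [hf k n (Finset.mem_range.mp hn)]))
  have hsN : Tendsto (fun k => s (N k)) atTop (nhds 0) := hs.comp hN.tendsto_atTop
  have hr : Tendsto (fun k => ‖r k‖) atTop (nhds 0) := by
    rw [← tendsto_add_atTop_iff_nat 1]
    refine squeeze_zero (fun _ => norm_nonneg _) (fun k => ?_) hsN
    rw [show r (k + 1) = _ from hres k (N (k + 1)) (hN (Nat.lt_succ_self k)).le, norm_sub_rev]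
    exact (hblk k).norm_sum_sub_le
  refine ⟨ε, fun n => ?_, tendsto_of_dist_le_of_strictMono hN
    (B := fun k => (1 + C) * ‖r k‖ + s (N k)) (by simpa using (hr.const_mul (1 + C)).add hsN)
    fun k Q hkQ hQk => ?_⟩
  · rw [hε (n + 1) n ((Nat.lt_succ_self n).trans_le (hN.id_le _))]
    exact (hblk n).sign n
  · rw [Finset.sum_congr rfl fun n hn => by
      rw [hε (k + 1) n ((Finset.mem_range.mp hn).trans hQk)],
      dist_eq_norm, norm_sub_rev, hres k Q hkQ]
    refine (norm_sub_le _ _).trans ?_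
    linarith [(hblk k).norm_sum_le Q hkQ hQk.le]

theorem norm_sub_norm_smul_le_of_mem_ball {x u : E} {δ : ℝ}
    (h : ‖x‖⁻¹ • x ∈ Metric.ball u δ) : ‖x - ‖x‖ • u‖ ≤ δ * ‖x‖ := by
  rcases eq_or_ne x 0 with rfl | hx
  · simp
  have hx' : x - ‖x‖ • u = ‖x‖ • (‖x‖⁻¹ • x - u) := by
    rw [smul_sub, smul_inv_smul₀ (norm_ne_zero_iff.mpr hx)]
  rw [hx', norm_smul, norm_norm, mul_comm]
  exact mul_le_mul_of_nonneg_right (mem_ball_iff_norm.mp h).le (norm_nonneg _)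

theorem norm_sum_sub_sum_norm_smul_le {ι : Type*} (S : Finset ι) {x : ι → E} {u : E} {δ : ℝ}
    (hx : ∀ n ∈ S, ‖x n‖⁻¹ • x n ∈ Metric.ball u δ) :
    ‖∑ n ∈ S, x n - (∑ n ∈ S, ‖x n‖) • u‖ ≤ δ * ∑ n ∈ S, ‖x n‖ := by
  rw [Finset.sum_smul, ← Finset.sum_sub_distrib, Finset.mul_sum]
  exact (norm_sum_le _ _).trans
    (Finset.sum_le_sum fun n hn => norm_sub_norm_smul_le_of_mem_ball (hx n hn))

theorem norm_smul_sub_smul_le_of_abs_le {X u : E} {σ m c s : ℝ} (hσ : |σ| = 1)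
    (hσc : σ * |c| = c) (hu : ‖u‖ = 1) (hX : ‖X - m • u‖ ≤ s) (hlo : |c| ≤ m)
    (hhi : m ≤ |c| + s) : ‖σ • X - c • u‖ ≤ 2 * s := by
  have hdecomp : σ • X - c • u = σ • (X - m • u) + (σ * (m - |c|)) • u := by
    rw [mul_sub, hσc, smul_sub, smul_smul, sub_smul]; abel
  rw [hdecomp]
  refine (norm_add_le _ _).trans ?_
  rw [norm_smul, norm_smul, hu, Real.norm_eq_abs, Real.norm_eq_abs, abs_mul, hσ,
    abs_of_nonneg (sub_nonneg.mpr hlo)]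
  linarith

variable [FiniteDimensional ℝ E]

open Module

theorem exists_signs_norm_sum_Ico_sub_le (p : ℕ → Prop) {σ : ℝ} (hσ : σ = 1 ∨ σ = -1) {s : ℝ}
    (hs : 0 ≤ s) {N M : ℕ} (has : ∀ n ∈ Ico N M, ‖a n‖ ≤ s) :
    ∃ ε : ℕ → ℝ, (∀ n, ε n = 1 ∨ ε n = -1) ∧ ∀ Q ≤ M,
      ‖∑ n ∈ Ico N Q, ε n • a n - σ • ∑ n ∈ Ico N Q with p n, a n‖ ≤ 2 * finrank ℝ E * s := by
  obtain ⟨τ, hτ, hτa⟩ := exists_signs_norm_sum_filter_lt_le (fun n => if p n then 0 else a n) hs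
    (Ico N M) fun n hn => by by_cases hpn : p n <;> simp [hpn, has n hn, hs]
  refine ⟨fun n => if p n then σ else τ n, fun n => ?_, fun Q hQ => ?_⟩
  · by_cases hpn : p n <;> simp [hpn, hσ, hτ n]
  · have hsplit : ∑ n ∈ Ico N Q, (if p n then σ else τ n) • a n - σ • ∑ n ∈ Ico N Q with p n, a n
        = ∑ n ∈ Ico N Q, τ n • (if p n then 0 else a n) := by
      rw [Finset.sum_filter, Finset.smul_sum, ← Finset.sum_sub_distrib]
      exact Finset.sum_congr rfl fun n _ => by by_cases hpn : p n <;> simp [hpn]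
    rw [hsplit]
    simpa [Finset.Ico_filter_lt, min_eq_right hQ] using hτa Q

theorem IsLevyVector.exists_isSignedBlock {u : E} (hu : IsLevyVector a u) (hu1 : ‖u‖ = 1)
    {s : ℝ} (hs : 0 < s) {N : ℕ} (has : ∀ n, N ≤ n → ‖a n‖ ≤ s) (c : ℝ) :
    ∃ M ε, N ≤ M ∧ IsSignedBlock a ε N M (c • u) ((2 * finrank ℝ E + 2) * s)
      (‖c • u‖ + (2 * finrank ℝ E + 2) * s) := by
  -- terms within `δ` of the direction `u` and of total length at most `|c| + s` deviate from `u`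
  -- by at most `s` in total
  set δ := s / (|c| + s)
  set p : ℕ → Prop := fun n => ‖a n‖⁻¹ • a n ∈ Metric.ball u δ
  obtain ⟨M, hNM, hlo, hhi⟩ := exists_sum_Ico_mem_Icc (N := N) (s := s)
    (g := fun n => if p n then ‖a n‖ else 0)
    (fun n => by by_cases hpn : p n <;> simp [hpn]) (hu δ (by positivity))
    (fun n hn => by by_cases hpn : p n <;> simp [hpn, has n hn, hs.le]) (abs_nonneg c)
  simp only [← Finset.sum_filter] at hlo hhi
  set X : ℕ → E := fun Q => ∑ n ∈ Ico N Q with p n, a n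
  set σ : ℝ := if 0 ≤ c then 1 else -1
  have hσ : |σ| = 1 ∧ σ * |c| = c := by
    by_cases hc : 0 ≤ c
    · simp [σ, hc, abs_of_nonneg hc]
    · simp [σ, hc, abs_of_neg (not_le.mp hc)]
  obtain ⟨ε, hε, hεa⟩ := exists_signs_norm_sum_Ico_sub_le p (σ := σ)
    (by by_cases hc : 0 ≤ c <;> simp [σ, hc]) hs.le fun n hn => has n (Finset.mem_Ico.mp hn).1
  have hX : ‖X M - (∑ n ∈ Ico N M with p n, ‖a n‖) • u‖ ≤ s := calc
    _ ≤ δ * ∑ n ∈ Ico N M with p n, ‖a n‖ :=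
        norm_sum_sub_sum_norm_smul_le _ fun n hn => (Finset.mem_filter.mp hn).2
    _ ≤ δ * (|c| + s) := by gcongr
    _ = s := div_mul_cancel₀ _ (by positivity)
  refine ⟨M, ε, hNM, hε, ?_, fun Q _ hQM => ?_⟩
  · rw [← sub_add_sub_cancel _ (σ • X M)]
    refine (norm_add_le_of_le (hεa M le_rfl)
      (norm_smul_sub_smul_le_of_abs_le hσ.1 hσ.2 hu1 hX hlo hhi)).trans_eq ?_
    ring
  · have hXQ : ‖σ • X Q‖ ≤ |c| + s := by
      rw [norm_smul, Real.norm_eq_abs, hσ.1, one_mul]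
      refine ((norm_sum_le _ _).trans (Finset.sum_le_sum_of_subset_of_nonneg ?_
        fun n _ _ => norm_nonneg _)).trans hhi
      exact Finset.filter_subset_filter _ (Finset.Ico_subset_Ico_right hQM)
    rw [norm_smul, hu1, mul_one, Real.norm_eq_abs]
    linarith [norm_le_norm_add_norm_sub' (∑ n ∈ Ico N Q, ε n • a n) (σ • X Q), hεa Q hQM]

theorem exists_signs_tendsto_of_isLevyVector (ha : Tendsto a atTop (nhds 0)) {ι : Type*}
    [Fintype ι] (b : Module.Basis ι ℝ E) (hb : ∀ i, ‖b i‖ = 1)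
    (hLevy : ∀ i, IsLevyVector a (b i)) (x : E) :
    ∃ ε : ℕ → ℝ, (∀ n, ε n = 1 ∨ ε n = -1) ∧
      Tendsto (fun Q => ∑ n ∈ range Q, ε n • a n) atTop (nhds x) := by
  obtain ⟨s, hs0, hs, has⟩ := exists_tendsto_zero_forall_norm_le ha
  obtain ⟨C, hC⟩ := b.exists_sum_norm_equivFun_smul_le
  set e : ℕ → ℝ := fun N => (2 * finrank ℝ E + 2) * s N
  refine exists_signs_tendsto_of_forall_isSignedBlock x (s := fun N => (Fintype.card ι + 1) * e N)
    (C := C) (by simpa using (hs.const_mul _).const_mul _) fun N w => ?_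
  obtain ⟨M, ε, hNM, hblk⟩ := exists_isSignedBlock_sum Finset.univ (fun i => b.equivFun w i • b i)
    (e := e N) ((has N N le_rfl).trans (le_mul_of_one_le_left (hs0 N).le
      (by linarith [Nat.cast_nonneg (α := ℝ) (finrank ℝ E)])))
    fun i _ N' hN' => (hLevy i).exists_isSignedBlock (hb i) (hs0 N)
      (fun n hn => has N n (hN'.trans hn)) _
  rw [b.sum_equivFun] at hblk
  exact ⟨M, ε, hNM, hblk.mono le_rfl (by simpa using hC w)⟩

end SignedBlocks

/-- If a null sequence `(aₙ)` in `ℝ^d` admits `d` linearly independent Lévy vectors, then its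
achievement set of signed sums is all of `ℝ^d`. -/
theorem stmt11 (d : ℕ) (a : ℕ → EuclideanSpace ℝ (Fin d))
    (ha : Tendsto a atTop (nhds 0))
    (u : Fin d → EuclideanSpace ℝ (Fin d)) (hu : ∀ i, ‖u i‖ = 1)
    (hind : LinearIndependent ℝ u)
    (hLevy : ∀ i, ∀ δ : ℝ, 0 < δ →
      ¬ Summable (fun n => if ‖a n‖⁻¹ • a n ∈ Metric.ball (u i) δ then ‖a n‖ else 0)) :
    {x : EuclideanSpace ℝ (Fin d) | ∃ ε : ℕ → ℝ, (∀ n, ε n = 1 ∨ ε n = -1) ∧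
      Tendsto (fun N => ∑ n ∈ Finset.range N, ε n • a n) atTop (nhds x)} = Set.univ := by
  set b := basisOfLinearIndependentOfCardEqFinrank' u hind (by simp)
  have hb : ⇑b = u := coe_basisOfLinearIndependentOfCardEqFinrank' u hind _
  exact Set.eq_univ_of_forall fun x => exists_signs_tendsto_of_isLevyVector ha b
    (fun i => by rw [hb]; exact hu i) (fun i => by rw [hb]; exact hLevy i) x
end

section
/- Let (a_n) be a real null sequence not in ℓ^1, let L ∈ R and k ≥ 2. Define s_j(ε) = ∑_{n=1}^{jk} ε_n a_n, and for each j let m(j) ∈ {jk+1,...,(j+1)k} be an index maximizing |a_n| on that block. Let Λ = {ε ∈ {-1,1}^N : for all j ≥ 0, (s_j − L)(s_{j+1} − s_j) ≤ 0 and |s_{j+1} − s_j| ≥ |a_{m(j)}|}. Then every ε ∈ Λ satisfies ∑_{n=1}^∞ ε_n a_n = L. -/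
/-!
Write `d j = |s_j - L|` for the deviation at the block endpoints. The sign condition says the
block step `y = s_{j+1} - s_j` points towards `L`: either it overshoots, and then `d (j+1) ≤ |y|`,
which is at most `k |a_{m j}|`, or it does not, and then `d (j+1) ≤ d j - |a_{m j}|`.
Since `|a n| ≤ |a_{m (n / k)}|`, the block maxima are not summable, so the second case cannot
persist, and once `k |a_{m j}| < δ` a single overshoot keeps `d` below `δ` forever. Inside a block
the partial sums move by at most `k |a_{m j}| → 0`.
-/

open Filter Finset Topology

lemma abs_add_le_or_le_sub {x y c : ℝ} (hxy : x * y ≤ 0) (hc : c ≤ |y|) :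
    |x + y| ≤ |y| ∨ |x + y| ≤ |x| - c := by
  rcases le_total |x| |y| with h | h <;> [left; right] <;>
    rcases abs_cases x with ⟨hx, _⟩ | ⟨hx, _⟩ <;> rcases abs_cases y with ⟨hy, _⟩ | ⟨hy, _⟩ <;>
    rw [abs_le] <;> constructor <;> nlinarith

lemma summable_of_le_sub_succ {c d : ℕ → ℝ} (hc : ∀ j, 0 ≤ c j) (hd : ∀ j, 0 ≤ d j)
    (h : ∀ j, c j ≤ d j - d (j + 1)) : Summable c :=
  summable_of_sum_range_le hc fun n =>
    calc ∑ j ∈ range n, c j ≤ ∑ j ∈ range n, (d j - d (j + 1)) := sum_le_sum fun j _ => h j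
      _ = d 0 - d n := sum_range_sub' d n
      _ ≤ d 0 := sub_le_self _ (hd n)

section Dichotomy

variable {B c d : ℕ → ℝ}

lemma frequently_le_of_le_or_le_sub (hc : ∀ j, 0 ≤ c j) (hd : ∀ j, 0 ≤ d j) (hcs : ¬ Summable c)
    (h : ∀ j, d (j + 1) ≤ B j ∨ d (j + 1) ≤ d j - c j) : ∃ᶠ j in atTop, d (j + 1) ≤ B j := by
  refine frequently_atTop.2 fun J => ?_
  by_contra! hJ
  refine hcs <| (summable_nat_add_iff J).1 <|
    summable_of_le_sub_succ (d := fun j => d (j + J)) (fun j => hc _) (fun j => hd _) fun j => ?_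
  have := (h (j + J)).resolve_left (hJ _ le_add_self).not_ge
  rw [add_right_comm] at this
  linarith

lemma tendsto_zero_of_le_or_le_sub (hc : ∀ j, 0 ≤ c j) (hd : ∀ j, 0 ≤ d j) (hcs : ¬ Summable c)
    (h : ∀ j, d (j + 1) ≤ B j ∨ d (j + 1) ≤ d j - c j) (hB : Tendsto B atTop (𝓝 0)) :
    Tendsto d atTop (𝓝 0) := by
  refine tendsto_order.2 ⟨fun δ hδ => .of_forall fun j => hδ.trans_le (hd j), fun δ hδ => ?_⟩
  obtain ⟨J, hJ⟩ := eventually_atTop.1 ((tendsto_order.1 hB).2 δ hδ)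
  obtain ⟨j₀, hj₀J, hj₀⟩ := frequently_atTop.1 (frequently_le_of_le_or_le_sub hc hd hcs h) J
  refine eventually_atTop.2 ⟨j₀ + 1, fun j hj => ?_⟩
  induction j, hj using Nat.le_induction with
  | base => exact hj₀.trans_lt (hJ j₀ hj₀J)
  | succ j hj ih =>
    rcases h j with hle | hle
    · exact hle.trans_lt (hJ j (by omega))
    · linarith [hc j]

end Dichotomy

lemma abs_sum_range_sub_sum_range_le {f : ℕ → ℝ} {C : ℝ} {p k N : ℕ}
    (hf : ∀ n ∈ Ico p (p + k), |f n| ≤ C) (hC : 0 ≤ C) (hN : N ∈ Icc p (p + k)) :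
    |∑ n ∈ range N, f n - ∑ n ∈ range p, f n| ≤ k * C := by
  obtain ⟨hpN, hNk⟩ := mem_Icc.1 hN
  rw [← sum_Ico_eq_sub _ hpN]
  calc |∑ n ∈ Ico p N, f n| ≤ ∑ n ∈ Ico p N, |f n| := abs_sum_le_sum_abs _ _
    _ ≤ #(Ico p N) • C := sum_le_card_nsmul _ _ _ fun n hn =>
        hf n (Ico_subset_Ico_right hNk hn)
    _ ≤ k * C := by
        rw [nsmul_eq_mul, Nat.card_Ico]
        gcongr
        exact_mod_cast Nat.sub_le_iff_le_add'.2 hNk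

lemma mem_Ico_div_mul_self {k : ℕ} (hk : 0 < k) (n : ℕ) : n ∈ Ico (n / k * k) ((n / k + 1) * k) :=
  mem_Ico.2 ⟨Nat.div_mul_le_self n k, by rw [add_one_mul]; exact Nat.lt_div_mul_add hk⟩

lemma Summable.comp_div_const {g : ℕ → ℝ} (hg : Summable g) (hg0 : 0 ≤ g) (k : ℕ) [NeZero k] :
    Summable fun n => g (n / k) := by
  have : Summable fun p : ℕ × Fin k => g p.1 :=
    (summable_prod_of_nonneg fun p => hg0 p.1).2
      ⟨fun _ => .of_finite, by simpa using hg.mul_left (k : ℝ)⟩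
  simpa [Function.comp_def] using this.comp_injective (Nat.divModEquiv k).injective

lemma tendsto_of_tendsto_comp_mul_of_abs_sub_le {f B : ℕ → ℝ} {L : ℝ} {k : ℕ} (hk : 0 < k)
    (hf : Tendsto (fun j => f (j * k)) atTop (𝓝 L)) (hB : Tendsto B atTop (𝓝 0))
    (hfB : ∀ j, ∀ N ∈ Ico (j * k) ((j + 1) * k), |f N - f (j * k)| ≤ B j) :
    Tendsto f atTop (𝓝 L) := by
  have hdiv := Nat.tendsto_div_const_atTop hk.ne'
  have htail : Tendsto (fun N => f N - f (N / k * k)) atTop (𝓝 0) :=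
    squeeze_zero_norm (fun N => hfB _ N (mem_Ico_div_mul_self hk N)) (hB.comp hdiv)
  simpa using (hf.comp hdiv).add htail

theorem stmt18_general (a : ℕ → ℝ) (h0 : Tendsto a atTop (nhds 0))
    (h1 : ¬ Summable (fun n => |a n|)) (L : ℝ) (k : ℕ)
    (m : ℕ → ℕ) (hm : ∀ j, m j ∈ Finset.Ico (j * k) ((j + 1) * k))
    (hmax : ∀ j, ∀ n ∈ Finset.Ico (j * k) ((j + 1) * k), |a n| ≤ |a (m j)|)
    (ε : ℕ → ℝ) (hε : ∀ n, ε n = 1 ∨ ε n = -1)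
    (hΛ : ∀ j : ℕ,
      ((∑ n ∈ Finset.range (j * k), ε n * a n) - L) *
          ((∑ n ∈ Finset.range ((j + 1) * k), ε n * a n) -
            ∑ n ∈ Finset.range (j * k), ε n * a n) ≤ 0 ∧
      |a (m j)| ≤
        |(∑ n ∈ Finset.range ((j + 1) * k), ε n * a n) -
          ∑ n ∈ Finset.range (j * k), ε n * a n|) :
    Tendsto (fun N => ∑ n ∈ Finset.range N, ε n * a n) atTop (nhds L) := by
  have hk : 0 < k := Nat.zero_lt_of_lt (by simpa using hm 0)
  have : NeZero k := ⟨hk.ne'⟩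
  set S : ℕ → ℝ := fun N => ∑ n ∈ range N, ε n * a n
  set c : ℕ → ℝ := fun j => |a (m j)|
  have hblock : ∀ j, ∀ N ∈ Icc (j * k) ((j + 1) * k), |S N - S (j * k)| ≤ k * c j := by
    intro j N hN
    rw [add_one_mul] at hN
    refine abs_sum_range_sub_sum_range_le (fun n hn => ?_) (abs_nonneg _) hN
    rcases hε n with h | h <;> simpa [h] using hmax j n (by rwa [add_one_mul])
  have hc : Tendsto c atTop (𝓝 0) := by
    have hm_top : Tendsto m atTop atTop := tendsto_atTop_mono
      (fun j => (Nat.le_mul_of_pos_right j hk).trans (mem_Ico.1 (hm j)).1) tendsto_id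
    simpa using (h0.comp hm_top).abs
  have hcs : ¬ Summable c := fun hc_sum => h1 <|
    (hc_sum.comp_div_const (fun _ => abs_nonneg _) k).of_nonneg_of_le (fun _ => abs_nonneg _)
      fun n => hmax _ n (mem_Ico_div_mul_self hk n)
  have hB : Tendsto (fun j => k * c j) atTop (𝓝 0) := by simpa using hc.const_mul (k : ℝ)
  have hd : Tendsto (fun j => |S (j * k) - L|) atTop (𝓝 0) := by
    refine tendsto_zero_of_le_or_le_sub (B := fun j => k * c j) (fun _ => abs_nonneg _)
      (fun _ => abs_nonneg _) hcs (fun j => ?_) hB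
    obtain ⟨hsign, hstep⟩ := hΛ j
    have hstep_le : |S ((j + 1) * k) - S (j * k)| ≤ k * c j :=
      hblock j _ (right_mem_Icc.2 (by gcongr; omega))
    have hcross_or_desc := abs_add_le_or_le_sub hsign hstep
    rw [sub_add_sub_cancel'] at hcross_or_desc
    exact hcross_or_desc.imp_left (·.trans hstep_le)
  exact tendsto_of_tendsto_comp_mul_of_abs_sub_le hk (tendsto_iff_norm_sub_tendsto_zero.2 hd)
    hB fun j N hN => hblock j N (Ico_subset_Icc_self hN)

/-- Let `(aₙ)` be a real null sequence with `∑ |aₙ| = ∞`, `L ∈ ℝ`, `k ≥ 2`. With blocks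
`I_j = {jk,...,(j+1)k-1}`, block maxima indices `m j`, and partial sums
`s_j = ∑_{n < jk} εₙ aₙ`, any sign sequence `ε` satisfying
`(s_j − L)(s_{j+1} − s_j) ≤ 0` and `|s_{j+1} − s_j| ≥ |a_{m j}|` for all `j` has
`∑ εₙ aₙ = L`. -/
theorem stmt18 (a : ℕ → ℝ) (h0 : Tendsto a atTop (nhds 0))
    (h1 : ¬ Summable (fun n => |a n|)) (L : ℝ) (k : ℕ) (hk : 2 ≤ k)
    (m : ℕ → ℕ) (hm : ∀ j, m j ∈ Finset.Ico (j * k) ((j + 1) * k))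
    (hmax : ∀ j, ∀ n ∈ Finset.Ico (j * k) ((j + 1) * k), |a n| ≤ |a (m j)|)
    (ε : ℕ → ℝ) (hε : ∀ n, ε n = 1 ∨ ε n = -1)
    (hΛ : ∀ j : ℕ,
      ((∑ n ∈ Finset.range (j * k), ε n * a n) - L) *
          ((∑ n ∈ Finset.range ((j + 1) * k), ε n * a n) -
            ∑ n ∈ Finset.range (j * k), ε n * a n) ≤ 0 ∧
      |a (m j)| ≤
        |(∑ n ∈ Finset.range ((j + 1) * k), ε n * a n) -
          ∑ n ∈ Finset.range (j * k), ε n * a n|) :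
    Tendsto (fun N => ∑ n ∈ Finset.range N, ε n * a n) atTop (nhds L) :=
  stmt18_general a h0 h1 L k m hm hmax ε hε hΛ
end

section
/- Let (a_n) be a real null sequence, L ∈ R, and for a fixed block I_j = {jk+1,...,(j+1)k} with m(j) an index maximizing |a_n| over I_j, and any fixed partial sum value s_j. Then among the 2^k choices of signs (ε_n)_{n ∈ I_j}, at least 2^{k-2} satisfy both (s_j − L)(s_{j+1} − s_j) ≤ 0 and |s_{j+1} − s_j| ≥ |a_{m(j)}|, where s_{j+1} = s_j + ∑_{n∈I_j} ε_n a_n. -/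
open Finset Classical

private lemma stmt19_sum_not {k : ℕ} (b : Fin k → ℝ) (ε : Fin k → Bool) :
    (∑ i, if (!ε i) then b i else -b i) = -∑ i, if ε i then b i else -b i := by
  rw [← Finset.sum_neg_distrib]
  refine Finset.sum_congr rfl fun i _ => ?_
  cases ε i <;> simp

/-- Counting lemma: for a block of `k` reals `b` with `|b i| ≤ |b m₀|`, any `s, L ∈ ℝ`, at
least `2^(k-2)` of the `2^k` sign choices `ε` on the block satisfy both
`(s − L) · (∑ εᵢ bᵢ) ≤ 0` and `|∑ εᵢ bᵢ| ≥ |b m₀|`. -/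
theorem stmt19 (k : ℕ) (hk : 2 ≤ k) (b : Fin k → ℝ) (m₀ : Fin k)
    (hmax : ∀ i, |b i| ≤ |b m₀|) (s L : ℝ) :
    2 ^ (k - 2) ≤
      Finset.card (Finset.univ.filter (fun ε : Fin k → Bool =>
        (s - L) * (∑ i, if ε i then b i else -b i) ≤ 0 ∧
        |b m₀| ≤ |∑ i, if ε i then b i else -b i|)) := by
  classical
  -- sum associated to a sign assignment
  set S : (Fin k → Bool) → ℝ := fun ε => ∑ i, if ε i then b i else -b i with hS
  -- a coordinate different from m₀
  obtain ⟨j₀, hj₀⟩ : ∃ j₀ : Fin k, j₀ ≠ m₀ := by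
    by_cases h : (m₀ : ℕ) = 0
    · refine ⟨⟨1, by omega⟩, fun hcon => ?_⟩
      have h2 := congrArg Fin.val hcon
      simp only [Fin.val_mk] at h2
      omega
    · refine ⟨⟨0, by omega⟩, fun hcon => ?_⟩
      have h2 := congrArg Fin.val hcon
      simp only [Fin.val_mk] at h2
      omega
  -- the normalization map
  set T : (Fin k → Bool) → ℝ := fun ε =>
    ∑ i ∈ Finset.univ.erase m₀,
      if (Function.update ε j₀ true) i then b i else -b i with hT
  set c : (Fin k → Bool) → Bool := fun ε => decide (|b m₀| ≤ |T ε + b m₀|) with hc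
  set δ₁ : (Fin k → Bool) → (Fin k → Bool) := fun ε =>
    Function.update (Function.update ε j₀ true) m₀ (c ε) with hδ₁
  set f : (Fin k → Bool) → Bool := fun ε => decide (0 < (s - L) * S (δ₁ ε)) with hf
  set Φ : (Fin k → Bool) → (Fin k → Bool) := fun ε i => xor (δ₁ ε i) (f ε) with hΦ
  -- S of δ₁
  have hSδ₁ : ∀ ε, S (δ₁ ε) = T ε + (if c ε then b m₀ else -b m₀) := by
    intro ε
    have : S (δ₁ ε) = (if δ₁ ε m₀ then b m₀ else -b m₀) +
        ∑ i ∈ Finset.univ.erase m₀, if δ₁ ε i then b i else -b i := by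
      rw [hS]
      exact (Finset.add_sum_erase _ _ (Finset.mem_univ m₀)).symm
    rw [this]
    have h1 : δ₁ ε m₀ = c ε := by simp [hδ₁]
    have h2 : ∀ i ∈ Finset.univ.erase m₀,
        (if δ₁ ε i then b i else -b i) =
        (if (Function.update ε j₀ true) i then b i else -b i) := by
      intro i hi
      have : i ≠ m₀ := Finset.ne_of_mem_erase hi
      simp [hδ₁, Function.update_of_ne this]
    rw [Finset.sum_congr rfl h2, h1, add_comm]
  -- |S (δ₁ ε)| ≥ |b m₀|
  have habs : ∀ ε, |b m₀| ≤ |S (δ₁ ε)| := by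
    intro ε
    rw [hSδ₁ ε]
    by_cases h : |b m₀| ≤ |T ε + b m₀|
    · simp [hc, h]
    · have h' : |T ε + b m₀| < |b m₀| := lt_of_not_ge h
      have key : 2 * |b m₀| ≤ |T ε + b m₀| + |T ε - b m₀| := by
        have := abs_sub (T ε + b m₀) (T ε - b m₀)
        have h2 : (T ε + b m₀) - (T ε - b m₀) = 2 * b m₀ := by ring
        calc 2 * |b m₀| = |(T ε + b m₀) - (T ε - b m₀)| := by
              rw [h2, abs_mul]; norm_num
          _ ≤ |T ε + b m₀| + |T ε - b m₀| := abs_sub _ _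
      have : |b m₀| ≤ |T ε - b m₀| := by linarith
      simpa [hc, h, sub_eq_add_neg] using this
  -- S of Φ ε
  have hSΦ : ∀ ε, S (Φ ε) = if f ε then -S (δ₁ ε) else S (δ₁ ε) := by
    intro ε
    by_cases h : f ε
    · have : Φ ε = fun i => !(δ₁ ε i) := by
        funext i; simp [hΦ, h]
      rw [this, if_pos h]
      exact stmt19_sum_not b (δ₁ ε)
    · have : Φ ε = δ₁ ε := by
        funext i; simp [hΦ, Bool.eq_false_iff.mpr h]
      rw [this, if_neg h]
  -- Φ lands in the target set
  have hmem : ∀ ε, Φ ε ∈ Finset.univ.filter (fun ε : Fin k → Bool =>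
      (s - L) * (∑ i, if ε i then b i else -b i) ≤ 0 ∧
      |b m₀| ≤ |∑ i, if ε i then b i else -b i|) := by
    intro ε
    rw [Finset.mem_filter]
    refine ⟨Finset.mem_univ _, ?_, ?_⟩
    · show (s - L) * S (Φ ε) ≤ 0
      rw [hSΦ ε]
      by_cases h : f ε
      · rw [if_pos h]
        have : 0 < (s - L) * S (δ₁ ε) := by
          have := h; rw [hf] at this; exact of_decide_eq_true this
        nlinarith
      · rw [if_neg h]
        have : ¬ (0 < (s - L) * S (δ₁ ε)) := by
          intro hcon
          exact h (by rw [hf]; exact decide_eq_true hcon)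
        linarith
    · show |b m₀| ≤ |S (Φ ε)|
      rw [hSΦ ε]
      by_cases h : f ε
      · rw [if_pos h, abs_neg]; exact habs ε
      · rw [if_neg h]; exact habs ε
  -- fibers of Φ have at most 4 elements
  have hfib : ∀ a ∈ Finset.univ.image Φ,
      ((Finset.univ.filter fun ε => Φ ε = a).card : ℕ) ≤ 4 := by
    intro a _
    have : (Finset.univ.filter fun ε => Φ ε = a).card ≤
        (Finset.univ : Finset (Bool × Bool)).card := by
      apply Finset.card_le_card_of_injOn (fun ε => (ε m₀, ε j₀))
      · intro ε _; exact Finset.mem_univ _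
      · intro ε hε ε' hε' hpair
        rw [Finset.mem_coe, Finset.mem_filter] at hε hε'
        have hΦeq : Φ ε = Φ ε' := by rw [hε.2, hε'.2]
        -- recover f from value at j₀
        have hfj : ∀ η : Fin k → Bool, Φ η j₀ = !(f η) := by
          intro η
          have : δ₁ η j₀ = true := by
            simp [hδ₁, Function.update_of_ne hj₀]
          simp [hΦ, this]
        have hff : f ε = f ε' := by
          have := congrFun hΦeq j₀
          rw [hfj ε, hfj ε'] at this
          exact Bool.not_inj this
        simp only [Prod.mk.injEq] at hpair
        funext i
        by_cases him : i = m₀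
        · subst him; exact hpair.1
        · by_cases hij : i = j₀
          · subst hij; exact hpair.2
          · have h1 := congrFun hΦeq i
            have hδ : ∀ η : Fin k → Bool, δ₁ η i = η i := by
              intro η
              simp [hδ₁, Function.update_of_ne him, Function.update_of_ne hij]
            rw [hΦ] at h1
            simp only at h1
            rw [hδ ε, hδ ε', hff] at h1
            cases hfe : f ε' <;> rw [hfe] at h1 <;> simpa using h1
    simpa using this
  -- count
  have hcard : (Finset.univ : Finset (Fin k → Bool)).card ≤
      4 * (Finset.univ.image Φ).card :=
    Finset.card_le_mul_card_image _ 4 hfib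
  have himg : (Finset.univ.image Φ).card ≤
      (Finset.univ.filter (fun ε : Fin k → Bool =>
        (s - L) * (∑ i, if ε i then b i else -b i) ≤ 0 ∧
        |b m₀| ≤ |∑ i, if ε i then b i else -b i|)).card := by
    apply Finset.card_le_card
    intro a ha
    rw [Finset.mem_image] at ha
    obtain ⟨ε, _, rfl⟩ := ha
    exact hmem ε
  have huniv : (Finset.univ : Finset (Fin k → Bool)).card = 2 ^ k := by
    simp [Finset.card_univ]
  have hpow : 2 ^ k = 4 * 2 ^ (k - 2) := by
    have : k - 2 + 2 = k := Nat.sub_add_cancel hk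
    calc 2 ^ k = 2 ^ (k - 2 + 2) := by rw [this]
      _ = 2 ^ (k - 2) * 4 := by rw [pow_add]; norm_num
      _ = 4 * 2 ^ (k - 2) := by ring
  have h4 : 4 * 2 ^ (k - 2) ≤ 4 * (Finset.univ.filter (fun ε : Fin k → Bool =>
      (s - L) * (∑ i, if ε i then b i else -b i) ≤ 0 ∧
      |b m₀| ≤ |∑ i, if ε i then b i else -b i|)).card := by
    calc 4 * 2 ^ (k - 2) = 2 ^ k := hpow.symm
      _ = (Finset.univ : Finset (Fin k → Bool)).card := huniv.symm
      _ ≤ 4 * (Finset.univ.image Φ).card := hcard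
      _ ≤ _ := Nat.mul_le_mul_left 4 himg
  exact Nat.le_of_mul_le_mul_left h4 (by norm_num)
end
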